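/- arXiv:1807.09129 — 10 statements merged into one kernel-verified Lean document; each statement's English description precedes it below -/
import Mathlib

section
/- Let K1 and K2 be closed subsets of the complex plane ℂ, neither of which contains 0, and let α, β, γ, δ ∈ ℂ. If the polynomial α + β·z1 + γ·z2 + δ·z1·z2 is nonzero for all z1 ∉ K1 and all z2 ∉ K2, then α + δ·z is nonzero for every z not belonging to the set −K1·K2 := { −w1·w2 : w1 ∈ K1, w2 ∈ K2 }. -/
/-!
Write `c = α / δ`, so that `α + δ z = 0` means `z = -c`, and suppose no `w₁ ∈ K1`, `w₂ ∈ K2`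
have `w₁ w₂ = c`. Off the degenerate case `αδ = βγ` (where the polynomial factors), solving the
polynomial for one variable gives mutually inverse Möbius maps `z₁ ↦ -(α + β z₁)/(γ + δ z₁)` and
`z₂ ↦ -(α + γ z₂)/(β + δ z₂)`. The hypothesis says the first sends `K1ᶜ` into `K2`; the identity
`(-(α + γ w)/(β + δ w)) · (-(α + β c/w)/(γ + δ c/w)) = c` shows that the second sends `K2` into
`K1ᶜ`. Hence `K2` is the preimage of the open set `K1ᶜ` under the second map, so it is clopen,
nonempty and not all of `ℂ`, contradicting connectedness.
-/

namespace AsanoContraction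

variable {K1 K2 : Set ℂ} {α β γ δ : ℂ}

theorem neg_div_mem_left (h : ∀ z1 ∉ K1, ∀ z2 ∉ K2, α + β * z1 + γ * z2 + δ * z1 * z2 ≠ 0)
    (h02 : (0 : ℂ) ∉ K2) (hβ : β ≠ 0) : -α / β ∈ K1 := by
  by_contra hn
  exact h _ hn 0 h02 (by field_simp; ring)

theorem neg_div_mem_right (h : ∀ z1 ∉ K1, ∀ z2 ∉ K2, α + β * z1 + γ * z2 + δ * z1 * z2 ≠ 0)
    (h01 : (0 : ℂ) ∉ K1) (hγ : γ ≠ 0) : -α / γ ∈ K2 := by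
  by_contra hn
  exact h 0 h01 _ hn (by field_simp; ring)

theorem neg_div_mem_right_of_notMem_left
    (h : ∀ z1 ∉ K1, ∀ z2 ∉ K2, α + β * z1 + γ * z2 + δ * z1 * z2 ≠ 0)
    {t : ℂ} (ht : t ∉ K1) (hd : γ + δ * t ≠ 0) : -(α + β * t) / (γ + δ * t) ∈ K2 := by
  by_contra hn
  refine h t ht _ hn ?_
  linear_combination div_mul_cancel₀ (-(α + β * t)) hd

theorem exists_mul_eq_of_mul_eq_mul
    (h : ∀ z1 ∉ K1, ∀ z2 ∉ K2, α + β * z1 + γ * z2 + δ * z1 * z2 ≠ 0)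
    (h01 : (0 : ℂ) ∉ K1) (h02 : (0 : ℂ) ∉ K2) (hα : α ≠ 0) (hδ : δ ≠ 0)
    (hD : α * δ = β * γ) : ∃ w1 ∈ K1, ∃ w2 ∈ K2, w1 * w2 = α / δ := by
  have hβγ : β * γ ≠ 0 := hD ▸ mul_ne_zero hα hδ
  refine ⟨_, neg_div_mem_left h h02 (left_ne_zero_of_mul hβγ), _,
    neg_div_mem_right h h01 (right_ne_zero_of_mul hβγ), ?_⟩
  rw [div_mul_div_comm, div_eq_div_iff hβγ hδ]
  linear_combination α * hD

theorem add_mul_ne_zero_of_mem_right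
    (h : ∀ z1 ∉ K1, ∀ z2 ∉ K2, α + β * z1 + γ * z2 + δ * z1 * z2 ≠ 0)
    (h02 : (0 : ℂ) ∉ K2) (hK : ∀ w1 ∈ K1, ∀ w2 ∈ K2, w1 * w2 ≠ α / δ) (hδ : δ ≠ 0)
    {w : ℂ} (hw : w ∈ K2) : β + δ * w ≠ 0 := by
  have hw0 : w ≠ 0 := ne_of_mem_of_not_mem hw h02
  intro hzero
  rcases eq_or_ne β 0 with hβ | hβ
  · rw [hβ, zero_add] at hzero
    exact mul_ne_zero hδ hw0 hzero
  · refine hK _ (neg_div_mem_left h h02 hβ) w hw ?_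
    rw [div_mul_eq_mul_div, div_eq_div_iff hβ hδ]
    linear_combination (-α) * hzero

theorem neg_div_notMem_left_of_mem_right
    (h : ∀ z1 ∉ K1, ∀ z2 ∉ K2, α + β * z1 + γ * z2 + δ * z1 * z2 ≠ 0)
    (h01 : (0 : ℂ) ∉ K1) (h02 : (0 : ℂ) ∉ K2) (hK : ∀ w1 ∈ K1, ∀ w2 ∈ K2, w1 * w2 ≠ α / δ)
    (hδ : δ ≠ 0) {w : ℂ} (hw : w ∈ K2) : -(α + γ * w) / (β + δ * w) ∉ K1 := by
  have hw0 : w ≠ 0 := ne_of_mem_of_not_mem hw h02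
  have hden := add_mul_ne_zero_of_mem_right h h02 hK hδ hw
  rcases eq_or_ne (α + γ * w) 0 with hnum | hnum
  · rwa [hnum, neg_zero, zero_div]
  intro hmem
  have hpartner : α / (δ * w) ∉ K1 := fun h1 ↦ hK _ h1 w hw (by field_simp)
  have hpartner_den : γ + δ * (α / (δ * w)) = (α + γ * w) / w := by
    field_simp
    ring
  have hroot := neg_div_mem_right_of_notMem_left h hpartner
    (hpartner_den ▸ div_ne_zero hnum hw0)
  have hroot_eq : -(α + β * (α / (δ * w))) / (γ + δ * (α / (δ * w)))
      = -α * (β + δ * w) / (δ * (α + γ * w)) := by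
    rw [hpartner_den]
    field_simp
    ring
  refine hK _ hmem _ (hroot_eq ▸ hroot) ?_
  rw [div_mul_div_comm, div_eq_div_iff (mul_ne_zero hden (mul_ne_zero hδ hnum)) hδ]
  ring

theorem eq_setOf_of_mul_ne_mul
    (h : ∀ z1 ∉ K1, ∀ z2 ∉ K2, α + β * z1 + γ * z2 + δ * z1 * z2 ≠ 0)
    (h01 : (0 : ℂ) ∉ K1) (h02 : (0 : ℂ) ∉ K2) (hK : ∀ w1 ∈ K1, ∀ w2 ∈ K2, w1 * w2 ≠ α / δ)
    (hδ : δ ≠ 0) (hD : α * δ ≠ β * γ) :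
    K2 = {w | β + δ * w ≠ 0 ∧ -(α + γ * w) / (β + δ * w) ∉ K1} := by
  ext w
  refine ⟨fun hw ↦ ⟨add_mul_ne_zero_of_mem_right h h02 hK hδ hw,
    neg_div_notMem_left_of_mem_right h h01 h02 hK hδ hw⟩, fun ⟨hden, hnot⟩ ↦ ?_⟩
  generalize hu : -(α + γ * w) / (β + δ * w) = u at hnot
  have hu_mul : u * (β + δ * w) = -(α + γ * w) := hu ▸ div_mul_cancel₀ _ hden
  have hden' : γ + δ * u ≠ 0 := by
    intro hzero
    apply hD
    linear_combination δ * hu_mul - (β + δ * w) * hzero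
  have hinv : -(α + β * u) / (γ + δ * u) = w := by
    rw [div_eq_iff hden']
    linear_combination (-1 : ℂ) * hu_mul
  exact hinv ▸ neg_div_mem_right_of_notMem_left h hnot hden'

theorem isOpen_setOf_ne_zero_and_notMem (hK1 : IsClosed K1) :
    IsOpen {w | β + δ * w ≠ 0 ∧ -(α + γ * w) / (β + δ * w) ∉ K1} := by
  have hcont : ContinuousOn (fun w ↦ -(α + γ * w) / (β + δ * w)) {w | β + δ * w ≠ 0} :=
    ContinuousOn.div (by fun_prop) (by fun_prop) fun _ hw ↦ hw
  exact hcont.isOpen_inter_preimage (isOpen_ne_fun (by fun_prop) (by fun_prop))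
    hK1.isOpen_compl

theorem nonempty_right (h : ∀ z1 ∉ K1, ∀ z2 ∉ K2, α + β * z1 + γ * z2 + δ * z1 * z2 ≠ 0)
    (hK1 : IsClosed K1) (h01 : (0 : ℂ) ∉ K1) (hδ : δ ≠ 0) : K2.Nonempty := by
  obtain ⟨t, ht, htpole⟩ := (dense_compl_singleton (-γ / δ)).inter_open_nonempty K1ᶜ
    hK1.isOpen_compl ⟨0, h01⟩
  refine ⟨_, neg_div_mem_right_of_notMem_left h ht fun hzero ↦ htpole ?_⟩
  rw [Set.mem_singleton_iff, eq_div_iff hδ]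
  linear_combination hzero

theorem exists_mul_eq_div (hK1 : IsClosed K1) (hK2 : IsClosed K2)
    (h01 : (0 : ℂ) ∉ K1) (h02 : (0 : ℂ) ∉ K2)
    (h : ∀ z1 ∉ K1, ∀ z2 ∉ K2, α + β * z1 + γ * z2 + δ * z1 * z2 ≠ 0)
    (hα : α ≠ 0) (hδ : δ ≠ 0) : ∃ w1 ∈ K1, ∃ w2 ∈ K2, w1 * w2 = α / δ := by
  rcases eq_or_ne (α * δ) (β * γ) with hD | hD
  · exact exists_mul_eq_of_mul_eq_mul h h01 h02 hα hδ hD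
  by_contra! hK
  have hopen : IsOpen K2 := eq_setOf_of_mul_ne_mul h h01 h02 hK hδ hD ▸ isOpen_setOf_ne_zero_and_notMem hK1
  rcases isClopen_iff.mp ⟨hK2, hopen⟩ with hempty | huniv
  · exact (nonempty_right h hK1 h01 hδ).ne_empty hempty
  · exact h02 (huniv ▸ Set.mem_univ 0)

end AsanoContraction

/-- **Asano–Ruelle contraction.** If `K1`, `K2` are closed subsets of `ℂ` not containing `0`,
and `α + β z₁ + γ z₂ + δ z₁ z₂` does not vanish whenever `z₁ ∉ K1` and `z₂ ∉ K2`,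
then `α + δ z` does not vanish whenever `z ∉ -K1·K2`. -/
theorem asano_contraction (K1 K2 : Set ℂ) (hK1 : IsClosed K1) (hK2 : IsClosed K2)
    (h01 : (0 : ℂ) ∉ K1) (h02 : (0 : ℂ) ∉ K2) (α β γ δ : ℂ)
    (h : ∀ z1 ∉ K1, ∀ z2 ∉ K2, α + β * z1 + γ * z2 + δ * z1 * z2 ≠ 0) :
    ∀ z : ℂ, z ∉ {w : ℂ | ∃ w1 ∈ K1, ∃ w2 ∈ K2, w = -(w1 * w2)} → α + δ * z ≠ 0 := by
  intro z hz hzero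
  have hα : α ≠ 0 := by simpa using h 0 h01 0 h02
  have hδ : δ ≠ 0 := by
    rintro rfl
    exact hα (by simpa using hzero)
  obtain ⟨w1, hw1, w2, hw2, hw⟩ := AsanoContraction.exists_mul_eq_div hK1 hK2 h01 h02 h hα hδ
  refine hz ⟨w1, hw1, w2, hw2, ?_⟩
  rw [hw]
  field_simp
  linear_combination hzero
end

section
/- Let d ≥ 1, let a_0, a_1, …, a_d ∈ ℂ, let P(z) = Σ_{i=0}^d a_i z^i, and let the d-th polar form of P be the multilinear symmetric polynomial P̂(z_1,…,z_d) = Σ_{I ⊆ {1,…,d}} (a_{|I|} / C(d,|I|)) · Π_{i∈I} z_i, where C(d,k) is the binomial coefficient. Then for every ε > 0, the following are equivalent: (i) P(z) ≠ 0 for every z ∈ ℂ with Re z ≥ −ε; (ii) P̂(z_1,…,z_d) ≠ 0 whenever z_1,…,z_d ∈ ℂ all satisfy Re z_i ≥ −ε. -/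
/-!
Evaluating the polar form on the diagonal gives back `P`, so one direction is immediate. For the
other, induct on the number of variables: once the last variable is frozen at `w`, the polar form
of `P` in `d + 1` variables is, up to the factor `d + 1`, the polar form in `d` variables of the
polar derivative `D_w P = m P + (w - X) P'`, `m = d + 1`. By Laguerre's theorem for the
half-plane, `D_w P` again has no zeros in `H_ε`: at `x ∈ H_ε` we have `P'(x) / P(x) = ∑ 1 / (x - r)`
over the `k ≤ m` roots `r`, which satisfy `re r < -ε`. Every `1 / (x - r)` lies in the convex set
`{v | c ‖v‖² < re v}` with `c = re x + ε`, hence so does their mean; but a zero of `D_w P` at `x`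
would put the mean at `m / (k (x - w))`, which lies outside it.
-/

open Finset Polynomial

/-- The points `v` with `c ‖v‖² < re v` form a disc (a half-plane if `c = 0`), which is convex:
the mean of finitely many such points is again one. -/
theorem mul_norm_sq_sum_lt_card_mul_re_sum {s : Multiset ℂ} (hs : s ≠ 0) {c : ℝ} (hc : 0 ≤ c)
    (hz : ∀ z ∈ s, c * ‖z‖ ^ 2 < z.re) : c * ‖s.sum‖ ^ 2 < Multiset.card s * s.sum.re := by
  classical
  have hne : s.toEnumFinset.Nonempty := by
    rw [← card_pos, Multiset.card_toEnumFinset]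
    exact Multiset.card_pos.2 hs
  rw [Multiset.sum_eq_sum_toEnumFinset, ← Multiset.card_toEnumFinset]
  calc c * ‖∑ p ∈ s.toEnumFinset, p.1‖ ^ 2
      ≤ c * (∑ p ∈ s.toEnumFinset, ‖p.1‖) ^ 2 := by gcongr; exact norm_sum_le _ _
    _ ≤ c * (#s.toEnumFinset * ∑ p ∈ s.toEnumFinset, ‖p.1‖ ^ 2) := by
      gcongr; exact sq_sum_le_card_mul_sum_sq
    _ = #s.toEnumFinset * ∑ p ∈ s.toEnumFinset, c * ‖p.1‖ ^ 2 := by rw [mul_left_comm, mul_sum]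
    _ < #s.toEnumFinset * ∑ p ∈ s.toEnumFinset, p.1.re := by
      refine mul_lt_mul_of_pos_left ?_ (by exact_mod_cast card_pos.2 hne)
      exact sum_lt_sum_of_nonempty hne fun p hp => hz _ (Multiset.mem_of_mem_toEnumFinset hp)
    _ = #s.toEnumFinset * (∑ p ∈ s.toEnumFinset, p.1).re := by rw [Complex.re_sum]

theorem mul_norm_inv_sq_lt_re_inv {c : ℝ} (hc : 0 ≤ c) {v : ℂ} (hv : c < v.re) :
    c * ‖v⁻¹‖ ^ 2 < v⁻¹.re := by
  have hN : 0 < Complex.normSq v := Complex.normSq_pos.2 fun h => by simp [h] at hv; linarith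
  rw [norm_inv, Complex.inv_re, inv_pow, Complex.sq_norm, ← div_eq_mul_inv]
  exact div_lt_div_of_pos_right hv hN

theorem natCast_mul_re_div_le {c : ℝ} (hc : 0 ≤ c) {k m : ℕ} (hkm : k ≤ m) {u : ℂ}
    (hu : u.re ≤ c) : k * ((m : ℂ) / u).re ≤ c * ‖(m : ℂ) / u‖ ^ 2 := by
  rw [norm_div, Complex.norm_natCast, div_pow, Complex.sq_norm, Complex.div_re,
    Complex.natCast_re, Complex.natCast_im, zero_mul, zero_div, add_zero, mul_div_assoc',
    mul_div_assoc']
  refine div_le_div_of_nonneg_right ?_ (Complex.normSq_nonneg u)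
  have hkm' : (k : ℝ) ≤ m := by exact_mod_cast hkm
  calc (k : ℝ) * (m * u.re) ≤ k * (m * c) := by gcongr
    _ ≤ c * m ^ 2 := by nlinarith [mul_nonneg hc (Nat.cast_nonneg (α := ℝ) m)]

namespace Polynomial

section PolarDeriv

variable {R : Type*} [CommRing R]

noncomputable def polarDeriv (n : ℕ) (w : R) (P : R[X]) : R[X] :=
  n • P + (C w - X) * derivative P

theorem eval_polarDeriv (n : ℕ) (w x : R) (P : R[X]) :
    (polarDeriv n w P).eval x = n * P.eval x + (w - x) * (derivative P).eval x := by
  simp [polarDeriv, nsmul_eq_mul]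

theorem coeff_polarDeriv (n : ℕ) (w : R) (P : R[X]) (k : ℕ) :
    (polarDeriv n w P).coeff k = (n - k) * P.coeff k + w * (k + 1) * P.coeff (k + 1) := by
  have hX : (X * derivative P).coeff k = k * P.coeff k := by
    cases k with
    | zero => simp
    | succ j => rw [coeff_X_mul, coeff_derivative]; push_cast; ring
  rw [polarDeriv, coeff_add, coeff_smul, nsmul_eq_mul, sub_mul, coeff_sub, coeff_C_mul, hX,
    coeff_derivative]
  ring

theorem natDegree_polarDeriv_le {n : ℕ} {P : R[X]} (hP : P.natDegree ≤ n + 1) (w : R) :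
    (polarDeriv (n + 1) w P).natDegree ≤ n := by
  refine natDegree_le_iff_coeff_eq_zero.2 fun k hk => ?_
  have hk : n < k := by exact_mod_cast hk
  have hlead : ((n + 1 : ℕ) - k : R) * P.coeff k = 0 := by
    rcases eq_or_ne k (n + 1) with rfl | hne
    · simp
    · rw [coeff_eq_zero_of_natDegree_lt (by omega), mul_zero]
  rw [coeff_polarDeriv, hlead, coeff_eq_zero_of_natDegree_lt (by omega : P.natDegree < k + 1)]
  ring

end PolarDeriv

theorem eval_polarDeriv_ne_zero_of_halfPlane {P : ℂ[X]} {m : ℕ} (hm : m ≠ 0)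
    (hdeg : P.natDegree ≤ m) {ε : ℝ} (hP : ∀ x : ℂ, -ε ≤ x.re → P.eval x ≠ 0) {x w : ℂ}
    (hx : -ε ≤ x.re) (hw : -ε ≤ w.re) : (polarDeriv m w P).eval x ≠ 0 := by
  have hPx := hP x hx
  set S := (P.roots.map fun r => 1 / (x - r)).sum with hS
  have hfactor : (polarDeriv m w P).eval x = P.eval x * (m + (w - x) * S) := by
    rw [eval_polarDeriv, (IsAlgClosed.splits P).eval_derivative_eq_eval_mul_sum hPx]
    ring
  rw [hfactor]
  refine mul_ne_zero hPx fun h => ?_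
  rcases eq_or_ne P.roots 0 with h0 | h0
  · simp [hS, h0, hm] at h
  have hc : 0 ≤ x.re + ε := by linarith
  have hdisk := mul_norm_sq_sum_lt_card_mul_re_sum (s := P.roots.map fun r => 1 / (x - r))
    (Multiset.map_eq_zero.not.2 h0) hc
    fun v hv => by
      obtain ⟨r, hr, rfl⟩ := Multiset.mem_map.1 hv
      have hr' : r.re < -ε := not_le.1 fun hr' => hP r hr' (isRoot_of_mem_roots hr)
      rw [one_div]
      exact mul_norm_inv_sq_lt_re_inv hc (by simp only [Complex.sub_re]; linarith)
  have hxw : x - w ≠ 0 := by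
    rintro hxw
    simp [← neg_sub x w, hxw, hm] at h
  have hSval : S = m / (x - w) := by
    rw [eq_div_iff hxw]
    linear_combination -h
  rw [← hS, Multiset.card_map, hSval] at hdisk
  refine (natCast_mul_re_div_le hc ((card_roots' P).trans hdeg) ?_).not_gt hdisk
  simp only [Complex.sub_re]
  linarith

section PolarForm

variable {ι K : Type*} [Field K]

def polarForm (s : Finset ι) (P : K[X]) (z : ι → K) : K :=
  ∑ I ∈ s.powerset, (P.coeff #I / ((#s).choose #I : K)) * ∏ i ∈ I, z i

variable [CharZero K]

theorem polarForm_const {s : Finset ι} {P : K[X]} (hP : P.natDegree ≤ #s) (x : K) :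
    polarForm s P (fun _ => x) = P.eval x := by
  simp only [polarForm, prod_const]
  rw [sum_powerset_apply_card (fun k => P.coeff k / ((#s).choose k : K) * x ^ k),
    eval_eq_sum_range' (Nat.lt_succ_of_le hP)]
  refine sum_congr rfl fun k hk => ?_
  have : ((#s).choose k : K) ≠ 0 :=
    Nat.cast_ne_zero.2 (Nat.choose_ne_zero (Nat.lt_succ_iff.1 (mem_range.1 hk)))
  rw [nsmul_eq_mul]
  field_simp

theorem polarForm_insert [DecidableEq ι] {s : Finset ι} {a : ι} (ha : a ∉ s) (P : K[X])
    (z : ι → K) :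
    ((#s + 1 : ℕ) : K) * polarForm (insert a s) P z =
      polarForm s (polarDeriv (#s + 1) (z a) P) z := by
  rw [polarForm, card_insert_of_notMem ha, sum_powerset_insert ha, mul_add, mul_sum, mul_sum,
    ← sum_add_distrib, polarForm]
  refine sum_congr rfl fun t ht => ?_
  have hat : a ∉ t := fun h => ha (mem_powerset.1 ht h)
  have hts : #t ≤ #s := card_le_card (mem_powerset.1 ht)
  rw [card_insert_of_notMem hat, prod_insert hat, coeff_polarDeriv]
  have h₁ : ((#s).choose #t : K) * (#s + 1) = ((#s + 1).choose #t : K) * (#s + 1 - #t) := by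
    have := Nat.choose_mul_succ_eq (#s) (#t)
    rw [← Nat.cast_inj (R := K)] at this
    push_cast [Nat.cast_sub (by omega : #t ≤ #s + 1)] at this
    exact this
  have h₂ : ((#s : K) + 1) * (#s).choose #t = ((#s + 1).choose (#t + 1) : K) * (#t + 1) := by
    exact_mod_cast Nat.add_one_mul_choose_eq (#s) (#t)
  have hc : ∀ {m k : ℕ}, k ≤ m → (m.choose k : K) ≠ 0 :=
    fun hkm => Nat.cast_ne_zero.2 (Nat.choose_ne_zero hkm)
  have := hc hts
  have := hc (by omega : #t ≤ #s + 1)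
  have := hc (by omega : #t + 1 ≤ #s + 1)
  push_cast
  field_simp
  linear_combination (P.coeff #t * ((#s + 1).choose (#t + 1) : K) * ∏ i ∈ t, z i) * h₁
    + (z a * P.coeff (#t + 1) * ((#s + 1).choose #t : K) * ∏ i ∈ t, z i) * h₂

end PolarForm

theorem polarForm_ne_zero_of_halfPlane {ι : Type*} [DecidableEq ι] {ε : ℝ} (s : Finset ι)
    {P : ℂ[X]} (hP : P.natDegree ≤ #s) (hstab : ∀ x : ℂ, -ε ≤ x.re → P.eval x ≠ 0)
    {z : ι → ℂ} (hz : ∀ i ∈ s, -ε ≤ (z i).re) : polarForm s P z ≠ 0 := by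
  induction s using Finset.induction_on generalizing P with
  | empty =>
    have hconst : polarForm (∅ : Finset ι) P z = polarForm ∅ P fun (_ : ι) => ((-ε : ℝ) : ℂ) := by
      simp [polarForm]
    rw [hconst, polarForm_const hP]
    exact hstab _ (by simp)
  | insert a s ha ih =>
    rw [card_insert_of_notMem ha] at hP
    have hw := hz a (mem_insert_self a s)
    refine right_ne_zero_of_mul (a := ((#s + 1 : ℕ) : ℂ)) ?_
    rw [polarForm_insert ha]
    exact ih (natDegree_polarDeriv_le hP _)
      (fun x hx => eval_polarDeriv_ne_zero_of_halfPlane (by omega) hP hstab hx hw)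
      (fun i hi => hz i (mem_insert_of_mem hi))

end Polynomial

theorem grace_walsh_szego_halfplane_general (d : ℕ) (a : ℕ → ℂ) (ε : ℝ) :
    (∀ z : ℂ, -ε ≤ z.re → ∑ i ∈ Finset.range (d + 1), a i * z ^ i ≠ 0) ↔
      (∀ z : Fin d → ℂ, (∀ i, -ε ≤ (z i).re) →
        ∑ I : Finset (Fin d), (a I.card / (d.choose I.card : ℂ)) * ∏ i ∈ I, z i ≠ 0) := by
  set P : ℂ[X] := ∑ i ∈ range (d + 1), C (a i) * X ^ i
  have hdeg : P.natDegree ≤ #(univ : Finset (Fin d)) := by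
    rw [card_univ, Fintype.card_fin]
    exact natDegree_sum_le_of_forall_le _ _ fun i hi =>
      (natDegree_C_mul_X_pow_le _ _).trans (Nat.lt_succ_iff.1 (mem_range.1 hi))
  have heval : ∀ x, P.eval x = ∑ i ∈ range (d + 1), a i * x ^ i := by
    simp [P, eval_finsetSum]
  have hpolar : ∀ z : Fin d → ℂ, polarForm univ P z =
      ∑ I : Finset (Fin d), (a I.card / (d.choose I.card : ℂ)) * ∏ i ∈ I, z i := by
    intro z
    simp only [polarForm, powerset_univ, card_univ, Fintype.card_fin]
    refine sum_congr rfl fun I _ => ?_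
    have hI : #I < d + 1 := Nat.lt_succ_of_le (by simpa using card_le_univ I)
    simp [P, finsetSum_coeff, hI]
  simp_rw [← heval, ← hpolar]
  constructor
  · exact fun hP z hz => polarForm_ne_zero_of_halfPlane univ hdeg hP fun i _ => hz i
  · intro h x hx
    rw [← polarForm_const hdeg]
    exact h _ fun _ => hx

/-- **Grace–Szegő–Walsh for the half-plane `H_ε`.** A univariate polynomial of degree at most `d`
is `H_ε`-stable iff its `d`-th polar form is `H_ε`-stable. -/
theorem grace_walsh_szego_halfplane (d : ℕ) (hd : 1 ≤ d) (a : ℕ → ℂ) (ε : ℝ) (hε : 0 < ε) :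
    (∀ z : ℂ, -ε ≤ z.re → ∑ i ∈ Finset.range (d + 1), a i * z ^ i ≠ 0) ↔
      (∀ z : Fin d → ℂ, (∀ i, -ε ≤ (z i).re) →
        ∑ I : Finset (Fin d), (a I.card / (d.choose I.card : ℂ)) * ∏ i ∈ I, z i ≠ 0) :=
  grace_walsh_szego_halfplane_general d a ε
end

section
/- Let Δ ≥ 1, let f = (f_0, f_1, …, f_Δ) be a vector of complex numbers, and suppose the local polynomial P_f(z) = Σ_{i=0}^Δ C(Δ,i) f_i z^i is H_ε-stable for some ε > 0. Let G = (V,E) be a finite Δ-regular simple graph, and for each subset σ ⊆ E and vertex v ∈ V let deg_σ(v) denote the number of edges of σ incident to v. Define Z_k(G;f) = Σ_{σ ⊆ E, |σ| = k} Π_{v∈V} f_{deg_σ(v)} and P_G(z) = Σ_{k=0}^{|E|} Z_k(G;f) z^k. Then P_G(z) ≠ 0 for every z in the δ-strip of [0,1] with δ = ε²/2. -/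
open Finset

/-!
Ruelle's contraction method. Split every edge `e = {u, w}` into two half-edges `(e, u)`, `(e, w)`
carrying independent variables. Before any contraction the weighted sum over sets of half-edges
factors over the vertices into multiaffine symmetrizations of `P_f`, which do not vanish while all
variables lie in `Re ≥ -ε` (Grace–Walsh–Szegő, here by induction on the degree: by Laguerre's
argument on the roots, polar derivatives of an `H_ε`-stable polynomial are `H_ε`-stable).
The sum is affine in the two variables of one edge, `A + B s + C t + D s t`, and contracting the
edge turns it into `A + D z`. This stays non-zero for `z` in the strip (Asano): if `A + D z = 0`
with `D ≠ 0`, write `ab + z = S T` with `a = C / D`, `b = B / D`, `Re S > Re a - ε`,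
`Re T > Re b - ε`; then `s = S - a`, `t = T - b` is a forbidden zero. Once every edge is contracted
the sum is `P_G(z)`.
-/

theorem four_mul_sub_mul_sub_lt_sq {ε U S t : ℝ} (hε : 0 < ε) (hU : ε ^ 2 ≤ U)
    (hS : ε ^ 2 / 2 ≤ S) (ht : 0 ≤ t) (htUS : 4 * U * S ≤ t ^ 2) :
    4 * (U - ε ^ 2) * (S - ε ^ 2 / 2) < (t - ε ^ 2 / 2) ^ 2 := by
  have hε2 : 0 < ε ^ 2 := by positivity
  have hUS : 0 ≤ U * S := mul_nonneg (by linarith) (by linarith)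
  set r := √(U * S)
  have hr2 : r ^ 2 = U * S := Real.sq_sqrt hUS
  have hr : 0 ≤ r := Real.sqrt_nonneg _
  have hrt : 2 * r ≤ t := by
    rw [← pow_le_pow_iff_left₀ (by positivity) ht two_ne_zero]; nlinarith
  have hrUS : 2 * r ≤ U + S := by
    rw [← pow_le_pow_iff_left₀ (by positivity) (by linarith) two_ne_zero]
    nlinarith [sq_nonneg (U - S)]
  have hr_lb : ε ^ 2 / 2 ≤ r := by
    rw [← pow_le_pow_iff_left₀ (by positivity) hr two_ne_zero]
    nlinarith [mul_le_mul hU hS (by positivity) (by linarith)]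
  have hmono : (2 * r - ε ^ 2 / 2) ^ 2 ≤ (t - ε ^ 2 / 2) ^ 2 :=
    pow_le_pow_left₀ (by linarith) (by linarith) 2
  have hgap : 0 < ε ^ 2 * (2 * U + 4 * S - 2 * r - 7 * ε ^ 2 / 4) :=
    mul_pos (by positivity) (by linarith)
  nlinarith

namespace Complex

theorem exists_re_gt_mul_eq_of_neg {α : ℝ} (hα : α < 0) (β : ℝ) (w : ℂ) :
    ∃ S T : ℂ, α < S.re ∧ β < T.re ∧ S * T = w := by
  obtain ⟨r, hr_def⟩ : ∃ r : ℝ, r = |β| + |w.re| / -α + 1 := ⟨_, rfl⟩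
  have hq : 0 ≤ |w.re| / -α := div_nonneg (abs_nonneg _) (by linarith)
  have hr : 0 < r := by rw [hr_def]; positivity
  refine ⟨w / r, r, ?_, by rw [ofReal_re, hr_def]; linarith [le_abs_self β], ?_⟩
  · rw [div_ofReal_re, lt_div_iff₀ hr]
    have : α * r = α * (|β| + 1) - |w.re| := by
      rw [hr_def]; field_simp [hα.ne]; ring
    nlinarith [neg_abs_le w.re, abs_nonneg β]
  · field_simp [ofReal_ne_zero.mpr hr.ne']

theorem exists_re_gt_mul_eq_sq {α β : ℝ} (hα : 0 ≤ α) (hβ : 0 ≤ β) {u : ℂ} (hu : 0 < u.re)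
    (h : α * β < u.re ^ 2) : ∃ S T : ℂ, α < S.re ∧ β < T.re ∧ S * T = u ^ 2 := by
  set g := u.re
  set τ : ℝ := (α + g ^ 2) / (g * (1 + β))
  have hτ : 0 < τ := by positivity
  refine ⟨τ * u, (τ⁻¹ : ℝ) * u, ?_, ?_, ?_⟩
  · rw [re_ofReal_mul]
    have : τ * g = (α + g ^ 2) / (1 + β) := by simp only [τ]; field_simp
    rw [this, lt_div_iff₀ (by positivity)]
    nlinarith
  · rw [re_ofReal_mul]
    have : τ⁻¹ * g = g ^ 2 * (1 + β) / (α + g ^ 2) := by simp only [τ]; field_simp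
    rw [this, lt_div_iff₀ (by positivity)]
    nlinarith
  · push_cast
    field_simp [ofReal_ne_zero.mpr hτ.ne']

theorem exists_sq_eq_of_re_nonneg (w : ℂ) :
    ∃ u : ℂ, u ^ 2 = w ∧ 0 ≤ u.re ∧ 2 * u.re ^ 2 = ‖w‖ + w.re := by
  obtain ⟨u, hu⟩ := IsAlgClosed.exists_pow_nat_eq w two_pos
  have key : ∀ v : ℂ, v ^ 2 = w → 2 * v.re ^ 2 = ‖w‖ + w.re := by
    rintro v rfl
    rw [norm_pow, Complex.sq_norm, normSq_apply, sq v, mul_re]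
    ring
  rcases le_total 0 u.re with h | h
  · exact ⟨u, hu, h, key u hu⟩
  · exact ⟨-u, by rw [neg_sq, hu], by simpa using h, key _ (by rw [neg_sq, hu])⟩

-- Since `‖w‖ + Re w = 2 (Re √w) ^ 2`, this is the hypothesis of `exists_re_gt_mul_eq_sq`.
theorem two_mul_lt_norm_add_re {ε : ℝ} (hε : 0 < ε) {a b z : ℂ} (ha : ε ≤ a.re)
    (hb : ε ≤ b.re) (hzi : |z.im| ≤ ε ^ 2 / 2) (hzr : -(ε ^ 2 / 2) ≤ z.re) :
    2 * ((a.re - ε) * (b.re - ε)) < ‖a * b + z‖ + (a * b + z).re := by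
  set w := a * b + z
  have hre : w.re = a.re * b.re - a.im * b.im + z.re := by simp [w]
  set J := a.re * b.im + b.re * a.im
  have him : w.im = J + z.im := by simp [w, J]; ring
  set p := a.re - ε
  set q := b.re - ε
  have hpq : 0 ≤ p * q := mul_nonneg (by linarith) (by linarith)
  rcases lt_or_ge (p * q) w.re with h | h
  · linarith [re_le_norm w]
  have hAB : ε ^ 2 ≤ a.re * b.re := by nlinarith
  have hσ : ε ^ 2 / 2 ≤ a.im * b.im := by nlinarith
  have hJ : 4 * (a.re * b.re) * (a.im * b.im) ≤ |J| ^ 2 := by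
    rw [sq_abs]; nlinarith [sq_nonneg (a.re * b.im - b.re * a.im)]
  have core := four_mul_sub_mul_sub_lt_sq hε hAB hσ (abs_nonneg J) hJ
  have hJ_lb : ε ^ 2 / 2 ≤ |J| := by
    rw [← pow_le_pow_iff_left₀ (by positivity) (abs_nonneg J) two_ne_zero]
    nlinarith [mul_le_mul hAB hσ (by positivity) (by nlinarith)]
  have him_lb : |J| - ε ^ 2 / 2 ≤ |w.im| := by
    have := abs_add_le (J + z.im) (-z.im)
    rw [add_neg_cancel_right, abs_neg] at this
    rw [him]; linarith
  have him_sq : (|J| - ε ^ 2 / 2) ^ 2 ≤ w.im ^ 2 := by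
    rw [← sq_abs w.im]; exact pow_le_pow_left₀ (by linarith) him_lb 2
  have hD : 4 * (p * q) * (p * q - w.re)
      ≤ 4 * (a.re * b.re - ε ^ 2) * (a.im * b.im - ε ^ 2 / 2) := by
    have h1 : p * q ≤ a.re * b.re - ε ^ 2 := by nlinarith
    have h2 : p * q - w.re ≤ a.im * b.im - ε ^ 2 / 2 := by nlinarith
    have := mul_le_mul h1 h2 (by linarith) (by linarith)
    linarith
  have hsq : (2 * (p * q) - w.re) ^ 2 < ‖w‖ ^ 2 := by
    rw [Complex.sq_norm, normSq_apply]; nlinarith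
  linarith [lt_of_pow_lt_pow_left₀ 2 (norm_nonneg w) hsq]

theorem exists_re_gt_mul_eq_mul_add {ε : ℝ} (hε : 0 < ε) (a b : ℂ) {z : ℂ}
    (hzi : |z.im| ≤ ε ^ 2 / 2) (hzr : -(ε ^ 2 / 2) ≤ z.re) :
    ∃ S T : ℂ, a.re - ε < S.re ∧ b.re - ε < T.re ∧ S * T = a * b + z := by
  rcases lt_or_ge a.re ε with ha | ha
  · exact exists_re_gt_mul_eq_of_neg (by linarith) _ _
  rcases lt_or_ge b.re ε with hb | hb
  · obtain ⟨T, S, hT, hS, h⟩ :=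
      exists_re_gt_mul_eq_of_neg (by linarith : b.re - ε < 0) (a.re - ε) (a * b + z)
    exact ⟨S, T, hS, hT, by rw [mul_comm, h]⟩
  obtain ⟨u, hsq, hu0, hu⟩ := exists_sq_eq_of_re_nonneg (a * b + z)
  have key := two_mul_lt_norm_add_re hε ha hb hzi hzr
  rw [← hu] at key
  have hpq : 0 ≤ (a.re - ε) * (b.re - ε) := mul_nonneg (by linarith) (by linarith)
  have hpos : 0 < u.re := lt_of_le_of_ne hu0 (by rintro h; rw [← h] at key; linarith)
  rw [← hsq]
  exact exists_re_gt_mul_eq_sq (by linarith) (by linarith) hpos (by linarith)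

end Complex

theorem asano_contraction_s4 {ε : ℝ} (hε : 0 < ε) {A B C D : ℂ}
    (h : ∀ s t : ℂ, -ε < s.re → -ε < t.re → A + B * s + C * t + D * (s * t) ≠ 0) {z : ℂ}
    (hzi : |z.im| ≤ ε ^ 2 / 2) (hzr : -(ε ^ 2 / 2) ≤ z.re) : A + D * z ≠ 0 := by
  rcases eq_or_ne D 0 with rfl | hD
  · simpa using h 0 0 (by simpa) (by simpa)
  intro hz
  obtain ⟨S, T, hS, hT, hST⟩ := Complex.exists_re_gt_mul_eq_mul_add hε (C / D) (B / D) hzi hzr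
  refine h (S - C / D) (T - B / D) (by rw [Complex.sub_re]; linarith)
    (by rw [Complex.sub_re]; linarith) ?_
  linear_combination D * hST + hz + (2 * B * C / D - B * S - C * T) * mul_inv_cancel₀ hD

theorem Multiset.norm_sum_sq_le_card_mul {E : Type*} [SeminormedAddCommGroup E] (s : Multiset E) :
    ‖s.sum‖ ^ 2 ≤ card s * (s.map fun u => ‖u‖ ^ 2).sum := by
  induction s using Multiset.induction_on with
  | empty => simp
  | cons a s ih =>
    rw [sum_cons, card_cons, map_cons, sum_cons]
    have hQ : 0 ≤ (s.map fun u => ‖u‖ ^ 2).sum := sum_nonneg fun _ hx => by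
      obtain ⟨u, -, rfl⟩ := mem_map.mp hx; positivity
    have htri : ‖a + s.sum‖ ^ 2 ≤ (‖a‖ + ‖s.sum‖) ^ 2 :=
      pow_le_pow_left₀ (norm_nonneg _) (norm_add_le _ _) 2
    push_cast
    suffices (‖a‖ + ‖s.sum‖) ^ 2 ≤ (card s + 1) * (‖a‖ ^ 2 + (s.map fun u => ‖u‖ ^ 2).sum) by
      linarith
    rcases (Nat.cast_nonneg (α := ℝ) (card s)).eq_or_lt with hm | hm
    · rw [← hm, zero_mul] at ih
      have : ‖s.sum‖ = 0 := by nlinarith [norm_nonneg s.sum]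
      rw [this, ← hm]; nlinarith
    · refine le_of_mul_le_mul_left ?_ hm
      nlinarith [sq_nonneg ((card s : ℝ) * ‖a‖ - ‖s.sum‖)]

theorem Complex.mul_norm_sum_sq_lt {c : ℝ} (hc : 0 ≤ c) {u : Multiset ℂ} (hu0 : u ≠ 0)
    (hu : ∀ v ∈ u, c * ‖v‖ ^ 2 < v.re) : c * ‖u.sum‖ ^ 2 < Multiset.card u * u.sum.re := by
  have hpos : 0 < (Multiset.card u : ℝ) := by exact_mod_cast Multiset.card_pos.mpr hu0
  calc c * ‖u.sum‖ ^ 2 ≤ c * (Multiset.card u * (u.map fun v => ‖v‖ ^ 2).sum) :=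
        mul_le_mul_of_nonneg_left u.norm_sum_sq_le_card_mul hc
    _ = Multiset.card u * (u.map fun v => c * ‖v‖ ^ 2).sum := by
        rw [Multiset.sum_map_mul_left]; ring
    _ < Multiset.card u * (u.map re).sum :=
        mul_lt_mul_of_pos_left (Multiset.sum_lt_sum_of_nonempty hu0 hu) hpos
    _ = Multiset.card u * u.sum.re := by congr 1; exact (map_multiset_sum reAddGroupHom u).symm

section Stability

open Polynomial

def HStable (ε : ℝ) (P : ℂ[X]) : Prop := ∀ ζ : ℂ, -ε ≤ ζ.re → P.eval ζ ≠ 0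

theorem HStable.polar {ε : ℝ} {P : ℂ[X]} (hP : HStable ε P) {n : ℕ} (hn : 0 < n)
    (hdeg : P.natDegree ≤ n) {w : ℂ} (hw : -ε ≤ w.re) :
    HStable ε (C (n : ℂ) * P + (C w - X) * derivative P) := by
  intro z hz
  have hPz := hP z hz
  simp only [eval_add, eval_mul, eval_C, eval_sub, eval_X]
  rw [(IsAlgClosed.splits P).eval_derivative_eq_eval_mul_sum hPz]
  set u := P.roots.map fun r => 1 / (z - r)
  set c := z.re + ε
  have hc : 0 ≤ c := by simp only [c]; linarith
  -- `Re (z - r) > c`, and inversion maps the half-plane `Re > c` into the disc `c ‖v‖² < Re v`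
  have hu : ∀ v ∈ u, c * ‖v‖ ^ 2 < v.re := by
    intro v hv
    obtain ⟨r, hr, rfl⟩ := Multiset.mem_map.mp hv
    have hr : r.re < -ε := by
      by_contra! h
      exact hP r h (mem_roots'.mp hr).2
    have hN : 0 < Complex.normSq (z - r) := Complex.normSq_pos.mpr fun h => by
      rw [sub_eq_zero] at h; subst h; linarith
    rw [one_div, norm_inv, Complex.inv_re, inv_pow, Complex.sq_norm, ← div_eq_mul_inv,
      div_lt_div_iff_of_pos_right hN, Complex.sub_re]
    linarith
  suffices h : (n : ℂ) + (w - z) * u.sum ≠ 0 by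
    convert mul_ne_zero hPz h using 1; ring
  intro h0
  rcases eq_or_ne u 0 with hu0 | hu0
  · rw [hu0, Multiset.sum_zero, mul_zero, add_zero] at h0
    exact hn.ne' (by exact_mod_cast h0)
  have hlt := Complex.mul_norm_sum_sq_lt hc hu0 hu
  have hcard : (Multiset.card u : ℝ) ≤ n := by
    exact_mod_cast (Multiset.card_map _ _).trans_le ((card_roots' P).trans hdeg)
  have hre : 0 ≤ u.sum.re := by
    nlinarith [mul_nonneg hc (sq_nonneg ‖u.sum‖), Multiset.card_pos.mpr hu0]
  have hconj : (w - z) * (‖u.sum‖ ^ 2 : ℝ) = ((-n : ℝ) : ℂ) * (starRingEnd ℂ) u.sum := by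
    rw [Complex.sq_norm, ← Complex.mul_conj, ← mul_assoc, eq_neg_of_add_eq_zero_right h0]
    push_cast; ring
  have hre' := congrArg Complex.re hconj
  rw [Complex.re_mul_ofReal, Complex.re_ofReal_mul, Complex.sub_re, Complex.conj_re] at hre'
  nlinarith [sq_nonneg ‖u.sum‖, mul_le_mul_of_nonneg_right hcard hre]

noncomputable def localPoly (n : ℕ) (f : ℕ → ℂ) : ℂ[X] :=
  ∑ i ∈ range (n + 1), C (n.choose i * f i) * X ^ i

theorem eval_localPoly (n : ℕ) (f : ℕ → ℂ) (z : ℂ) :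
    (localPoly n f).eval z = ∑ i ∈ range (n + 1), (n.choose i : ℂ) * f i * z ^ i := by
  simp [localPoly, eval_finsetSum]

theorem natDegree_localPoly_le (n : ℕ) (f : ℕ → ℂ) : (localPoly n f).natDegree ≤ n :=
  natDegree_sum_le_of_forall_le _ _ fun _ hi =>
    (natDegree_C_mul_X_pow_le _ _).trans (Nat.lt_succ_iff.mp (mem_range.mp hi))

theorem localPoly_add_mul (n : ℕ) (f g : ℕ → ℂ) (w : ℂ) :
    localPoly n (fun i => f i + w * g i) = localPoly n f + C w * localPoly n g := by
  simp only [localPoly, mul_sum, ← sum_add_distrib]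
  refine sum_congr rfl fun i _ => ?_
  simp only [C_mul, C_add]; ring

theorem localPoly_succ (m : ℕ) (f : ℕ → ℂ) :
    localPoly (m + 1) f = localPoly m f + X * localPoly m (fun i => f (i + 1)) := by
  have hshift : localPoly m f
      = ∑ k ∈ range (m + 1), C (m.choose (k + 1) * f (k + 1)) * X ^ (k + 1) + C (f 0) := by
    rw [localPoly, sum_range_succ', sum_range_succ (fun k => C _ * X ^ (k + 1)),
      Nat.choose_succ_self]
    simp
  have hpascal : ∀ k, C (((m + 1).choose (k + 1) : ℂ) * f (k + 1)) * X ^ (k + 1)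
      = C (m.choose (k + 1) * f (k + 1)) * X ^ (k + 1)
        + X * (C (m.choose k * f (k + 1)) * X ^ k) := by
    intro k
    rw [Nat.choose_succ_succ', Nat.cast_add, add_mul, C_add]
    ring
  rw [localPoly, sum_range_succ', hshift, localPoly, mul_sum]
  simp only [hpascal, sum_add_distrib, Nat.choose_zero_right, Nat.cast_one, one_mul, pow_zero,
    mul_one]
  ring

theorem derivative_localPoly_succ (m : ℕ) (f : ℕ → ℂ) :
    derivative (localPoly (m + 1) f) = C ((m : ℂ) + 1) * localPoly m (fun i => f (i + 1)) := by
  simp only [localPoly, derivative_sum, derivative_C_mul_X_pow, mul_sum]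
  rw [sum_range_succ']
  refine (add_eq_left.mpr (by simp)).trans (sum_congr rfl fun i _ => ?_)
  rw [Nat.add_sub_cancel, ← mul_assoc, ← C_mul]
  congr 2
  have := congrArg (Nat.cast (R := ℂ)) (Nat.add_one_mul_choose_eq m i)
  push_cast at this ⊢
  linear_combination (-f (i + 1)) * this

theorem HStable.localPoly_shift {ε : ℝ} {m : ℕ} {f : ℕ → ℂ} (hf : HStable ε (localPoly (m + 1) f))
    {w : ℂ} (hw : -ε ≤ w.re) : HStable ε (localPoly m fun i => f i + w * f (i + 1)) := by
  intro z hz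
  have h := hf.polar m.succ_pos (natDegree_localPoly_le _ _) hw z hz
  have hpolar : C ((m + 1 : ℕ) : ℂ) * localPoly (m + 1) f
      + (C w - X) * derivative (localPoly (m + 1) f)
      = C ((m : ℂ) + 1) * localPoly m (fun i => f i + w * f (i + 1)) := by
    rw [localPoly_add_mul, derivative_localPoly_succ, localPoly_succ]
    push_cast; ring
  rw [hpolar, eval_mul] at h
  exact right_ne_zero_of_mul h

theorem sum_powerset_mul_prod_ne_zero {ε : ℝ} {ι : Type*} [DecidableEq ι] (x : ι → ℂ) {n : ℕ} :
    ∀ {f : ℕ → ℂ}, HStable ε (localPoly n f) → ∀ {s : Finset ι}, s.card = n →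
      (∀ j ∈ s, -ε ≤ (x j).re) → ∑ A ∈ s.powerset, f A.card * ∏ j ∈ A, x j ≠ 0 := by
  induction n with
  | zero =>
    intro f hf s hs _
    rw [card_eq_zero.mp hs]
    simpa [localPoly] using hf (-ε) (by simp)
  | succ m ih =>
    intro f hf s hs hx
    obtain ⟨j, hj⟩ := card_pos.mp (by rw [hs]; exact m.succ_pos)
    have hsplit : ∑ A ∈ s.powerset, f A.card * ∏ i ∈ A, x i
        = ∑ A ∈ (s.erase j).powerset, (f A.card + x j * f (A.card + 1)) * ∏ i ∈ A, x i := by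
      conv_lhs => rw [← insert_erase hj]
      rw [sum_powerset_insert (notMem_erase j s), ← sum_add_distrib]
      refine sum_congr rfl fun A hA => ?_
      have hjA : j ∉ A := fun h => notMem_erase j s (mem_powerset.mp hA h)
      rw [card_insert_of_notMem hjA, prod_insert hjA]
      ring
    rw [hsplit]
    exact ih (hf.localPoly_shift (hx j hj)) (by rw [card_erase_of_mem hj, hs]; rfl)
      fun i hi => hx i (mem_of_mem_erase hi)

end Stability

theorem Finset.sum_powerset_prod_filter {α β M : Type*} [DecidableEq α] [Fintype β] [DecidableEq β]
    [CommSemiring M] (U : Finset α) (key : α → β) (F : β → Finset α → M) :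
    ∑ H ∈ U.powerset, ∏ b, F b (H.filter (key · = b))
      = ∏ b, ∑ A ∈ (U.filter (key · = b)).powerset, F b A := by
  rw [prod_univ_sum]
  have hfilter : ∀ p ∈ Fintype.piFinset fun b => (U.filter (key · = b)).powerset, ∀ b,
      (univ.biUnion p).filter (key · = b) = p b := by
    intro p hp b
    ext a
    simp only [mem_filter, mem_biUnion, mem_univ, true_and]
    constructor
    · rintro ⟨⟨b', hb'⟩, rfl⟩
      have := (mem_filter.mp (mem_powerset.mp (Fintype.mem_piFinset.mp hp b') hb')).2
      rwa [this]
    · intro ha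
      exact ⟨⟨b, ha⟩, (mem_filter.mp (mem_powerset.mp (Fintype.mem_piFinset.mp hp b) ha)).2⟩
  symm
  refine sum_nbij' (fun p => univ.biUnion p) (fun H b => H.filter (key · = b)) ?_ ?_ ?_ ?_ ?_
  · intro p hp
    simp only [mem_powerset, biUnion_subset]
    exact fun b _ => (mem_powerset.mp (Fintype.mem_piFinset.mp hp b)).trans (filter_subset _ _)
  · intro H hH
    simp only [Fintype.mem_piFinset, mem_powerset]
    exact fun b => filter_subset_filter _ (mem_powerset.mp hH)
  · intro p hp
    funext b
    exact hfilter p hp b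
  · intro H _
    exact biUnion_filter_eq_of_maps_to fun _ _ => mem_univ _
  · intro p hp
    simp only [hfilter p hp]

theorem Finset.sum_powerset_prod_update {α β M : Type*} [DecidableEq α] [DecidableEq β]
    [CommSemiring M] (U : Finset α) (key : α → β) {E : Finset β} {e : β} (he : e ∈ E)
    (ω : β → Finset α → M) (F : Finset α → M) :
    ∃ R : Finset α → M, ∀ g : Finset α → M,
      ∑ H ∈ U.powerset, (∏ b ∈ E, Function.update ω e g b (H.filter (key · = b))) * F H
        = ∑ K ∈ (U.filter (key · = e)).powerset, g K * R K := by
  refine ⟨fun K => ∑ H ∈ U.powerset with H.filter (key · = e) = K,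
    (∏ b ∈ E.erase e, ω b (H.filter (key · = b))) * F H, fun g => ?_⟩
  rw [← sum_fiberwise_of_maps_to (g := fun H => H.filter (key · = e))
    fun H hH => mem_powerset.mpr (filter_subset_filter _ (mem_powerset.mp hH))]
  refine sum_congr rfl fun K _ => ?_
  rw [mul_sum]
  refine sum_congr rfl fun H hH => ?_
  rw [← mul_prod_erase E _ he, Function.update_self, (mem_filter.mp hH).2,
    prod_congr rfl fun b hb => by rw [Function.update_of_ne (ne_of_mem_erase hb)]]
  ring

theorem Finset.sum_powerset_pair {α M : Type*} [DecidableEq α] [AddCommMonoid M] {a b : α}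
    (hab : a ≠ b) (φ : Finset α → M) :
    ∑ K ∈ ({a, b} : Finset α).powerset, φ K = φ ∅ + φ {a} + φ {b} + φ {a, b} := by
  have hb : ({b} : Finset α) = insert b ∅ := rfl
  rw [sum_powerset_insert (by simpa using hab), hb, sum_powerset_insert (notMem_empty b),
    sum_powerset_insert (notMem_empty b)]
  simp only [powerset_empty, sum_singleton, insert_empty_eq]
  abel

theorem Finset.sum_powerset_mul_pow_card {α M : Type*} [CommSemiring M] (s : Finset α)
    (a : Finset α → M) (z : M) :
    ∑ σ ∈ s.powerset, z ^ σ.card * a σ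
      = ∑ k ∈ range (s.card + 1), (∑ σ ∈ s.powerset with σ.card = k, a σ) * z ^ k := by
  rw [← sum_fiberwise_of_maps_to (g := card) (t := range (s.card + 1))
    fun σ hσ => mem_range.mpr (Nat.lt_succ_of_le (card_le_card (mem_powerset.mp hσ)))]
  refine sum_congr rfl fun k _ => ?_
  rw [sum_mul]
  refine sum_congr rfl fun σ hσ => ?_
  rw [(mem_filter.mp hσ).2, mul_comm]

section Holant

variable {V : Type*} [DecidableEq V]

def freeWeight (y : V → ℂ) (K : Finset (Sym2 V × V)) : ℂ :=
  ∏ p ∈ K, y p.2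

-- A contracted edge contributes `z` if both of its half-edges are chosen, `1` if neither is.
def contractedWeight {α : Type*} (z : ℂ) (K : Finset α) : ℂ :=
  if K.card = 0 then 1 else if K.card = 2 then z else 0

-- `S` is the set of contracted edges; every other edge `e` carries the variables `x e v`.
def edgeWeights (S : Finset (Sym2 V)) (z : ℂ) (x : Sym2 V → V → ℂ) (e : Sym2 V) :
    Finset (Sym2 V × V) → ℂ :=
  if e ∈ S then contractedWeight z else freeWeight (x e)

theorem edgeWeights_insert {S : Finset (Sym2 V)} {e : Sym2 V} (z : ℂ) (x : Sym2 V → V → ℂ) :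
    edgeWeights (insert e S) z x = Function.update (edgeWeights S z x) e (contractedWeight z) := by
  funext e'
  by_cases h : e' = e
  · subst h; simp [edgeWeights]
  · simp [edgeWeights, h]

theorem edgeWeights_update {S : Finset (Sym2 V)} {e : Sym2 V} (he : e ∉ S) (z : ℂ)
    (x : Sym2 V → V → ℂ) (y : V → ℂ) :
    edgeWeights S z (Function.update x e y)
      = Function.update (edgeWeights S z x) e (freeWeight y) := by
  funext e'
  by_cases h : e' = e
  · subst h; simp [edgeWeights, he]
  · simp [edgeWeights, h]

variable [Fintype V]

def halfEdges (E : Finset (Sym2 V)) : Finset (Sym2 V × V) :=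
  (E ×ˢ univ).filter fun p => p.2 ∈ p.1

theorem mem_halfEdges {E : Finset (Sym2 V)} {p : Sym2 V × V} :
    p ∈ halfEdges E ↔ p.1 ∈ E ∧ p.2 ∈ p.1 := by
  simp [halfEdges]

theorem halfEdges_filter_fst_of_mem {E : Finset (Sym2 V)} {u w : V} (h : s(u, w) ∈ E) :
    (halfEdges E).filter (·.1 = s(u, w)) = {(s(u, w), u), (s(u, w), w)} := by
  ext ⟨e, v⟩
  simp only [mem_filter, mem_halfEdges, mem_insert, mem_singleton, Prod.mk.injEq]
  constructor
  · rintro ⟨⟨-, hv⟩, rfl⟩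
    rcases Sym2.mem_iff.mp hv with rfl | rfl <;> simp
  · rintro (⟨rfl, rfl⟩ | ⟨rfl, rfl⟩) <;> simp [h]

theorem halfEdges_filter_fst_of_notMem {E : Finset (Sym2 V)} {e : Sym2 V} (h : e ∉ E) :
    (halfEdges E).filter (·.1 = e) = ∅ :=
  filter_eq_empty_iff.mpr fun _ hp he => h (he ▸ (mem_halfEdges.mp hp).1)

theorem card_halfEdges_filter_fst {E : Finset (Sym2 V)} {e : Sym2 V} (he : e ∈ E)
    (hd : ¬e.IsDiag) : ((halfEdges E).filter (·.1 = e)).card = 2 := by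
  induction e using Sym2.ind with
  | _ u w =>
    rw [halfEdges_filter_fst_of_mem he, card_pair]
    simpa using hd

theorem card_halfEdges_filter_snd (E : Finset (Sym2 V)) (v : V) :
    ((halfEdges E).filter (·.2 = v)).card = (E.filter (v ∈ ·)).card := by
  refine card_nbij' Prod.fst (fun e => (e, v)) ?_ ?_ ?_ fun _ _ => rfl
  · intro p hp
    simp only [mem_coe, mem_filter, mem_halfEdges] at hp ⊢
    exact ⟨hp.1.1, hp.2 ▸ hp.1.2⟩
  · intro e he
    simpa [mem_halfEdges] using he
  · intro p hp
    simp only [mem_coe, mem_filter] at hp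
    rw [← hp.2]

theorem image_fst_halfEdges (σ : Finset (Sym2 V)) : (halfEdges σ).image Prod.fst = σ := by
  ext e
  simp only [mem_image, mem_halfEdges]
  constructor
  · rintro ⟨p, ⟨hp, -⟩, rfl⟩
    exact hp
  · intro he
    induction e using Sym2.ind with
    | _ u w => exact ⟨(s(u, w), u), ⟨he, Sym2.mem_mk_left u w⟩, rfl⟩

theorem halfEdges_mono {σ E : Finset (Sym2 V)} (h : σ ⊆ E) : halfEdges σ ⊆ halfEdges E :=
  fun _ hp => mem_halfEdges.mpr ⟨h (mem_halfEdges.mp hp).1, (mem_halfEdges.mp hp).2⟩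

noncomputable def holantSum (f : ℕ → ℂ) (E : Finset (Sym2 V))
    (ω : Sym2 V → Finset (Sym2 V × V) → ℂ) : ℂ :=
  ∑ H ∈ (halfEdges E).powerset,
    (∏ e ∈ E, ω e (H.filter (·.1 = e))) * ∏ v, f (H.filter (·.2 = v)).card

theorem holantSum_update {f : ℕ → ℂ} {E : Finset (Sym2 V)} {u w : V} (he : s(u, w) ∈ E)
    (huw : u ≠ w) (ω : Sym2 V → Finset (Sym2 V × V) → ℂ) :
    ∃ A B C D : ℂ, ∀ g : Finset (Sym2 V × V) → ℂ,
      holantSum f E (Function.update ω s(u, w) g)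
        = g ∅ * A + g {(s(u, w), u)} * B + g {(s(u, w), w)} * C
          + g {(s(u, w), u), (s(u, w), w)} * D := by
  obtain ⟨R, hR⟩ := sum_powerset_prod_update (halfEdges E) Prod.fst he ω
    fun H => ∏ v, f (H.filter fun p : Sym2 V × V => p.2 = v).card
  refine ⟨R ∅, R {(s(u, w), u)}, R {(s(u, w), w)}, R {(s(u, w), u), (s(u, w), w)}, fun g => ?_⟩
  rw [holantSum, hR, halfEdges_filter_fst_of_mem he, sum_powerset_pair (by simpa using huw)]

theorem holantSum_edgeWeights_empty (f : ℕ → ℂ) (E : Finset (Sym2 V)) (z : ℂ)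
    (x : Sym2 V → V → ℂ) :
    holantSum f E (edgeWeights ∅ z x)
      = ∏ v, ∑ A ∈ ((halfEdges E).filter (·.2 = v)).powerset, f A.card * ∏ p ∈ A, x p.1 p.2 := by
  rw [← sum_powerset_prod_filter]
  refine sum_congr rfl fun H hH => ?_
  have hH : ∀ p ∈ H, p.1 ∈ E := fun p hp => (mem_halfEdges.mp (mem_powerset.mp hH hp)).1
  have hfree : ∏ e ∈ E, edgeWeights ∅ z x e (H.filter (·.1 = e)) = ∏ p ∈ H, x p.1 p.2 := by
    rw [← prod_fiberwise_of_maps_to hH]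
    refine prod_congr rfl fun e _ => prod_congr rfl fun p hp => ?_
    rw [(mem_filter.mp hp).2]
  rw [hfree, ← prod_fiberwise_of_maps_to (g := Prod.snd) (t := univ) fun _ _ => mem_univ _,
    ← prod_mul_distrib]
  exact prod_congr rfl fun v _ => mul_comm _ _

theorem prod_contractedWeight_halfEdges {σ E : Finset (Sym2 V)} (hσ : σ ⊆ E)
    (hE : ∀ e ∈ E, ¬e.IsDiag) (z : ℂ) :
    ∏ e ∈ E, contractedWeight z ((halfEdges σ).filter (·.1 = e)) = z ^ σ.card := by
  have hweight : ∀ e ∈ E,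
      contractedWeight z ((halfEdges σ).filter (·.1 = e)) = if e ∈ σ then z else 1 := by
    intro e he
    by_cases heσ : e ∈ σ
    · simp [contractedWeight, heσ, card_halfEdges_filter_fst heσ (hE e he)]
    · simp [contractedWeight, heσ, halfEdges_filter_fst_of_notMem heσ]
  rw [prod_congr rfl hweight, prod_ite_mem, inter_eq_right.mpr hσ, prod_const]

theorem halfEdges_image_fst {E : Finset (Sym2 V)} (hE : ∀ e ∈ E, ¬e.IsDiag) (z : ℂ)
    {H : Finset (Sym2 V × V)} (hH : H ⊆ halfEdges E)
    (hne : ∀ e ∈ E, contractedWeight z (H.filter (·.1 = e)) ≠ 0) :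
    halfEdges (H.image Prod.fst) = H := by
  ext p
  simp only [mem_halfEdges, mem_image]
  constructor
  · rintro ⟨⟨q, hq, hqp⟩, hp⟩
    have hqE := (mem_halfEdges.mp (hH hq)).1
    have hfull : H.filter (·.1 = q.1) = (halfEdges E).filter (·.1 = q.1) := by
      refine eq_of_subset_of_card_le (filter_subset_filter _ hH) ?_
      rw [card_halfEdges_filter_fst hqE (hE _ hqE)]
      have := hne _ hqE
      unfold contractedWeight at this
      split_ifs at this with h0 h2
      · exact absurd (card_eq_zero.mp h0 ▸ mem_filter.mpr ⟨hq, rfl⟩) (notMem_empty q)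
      · exact h2.ge
      · exact absurd rfl this
    have : p ∈ (halfEdges E).filter (·.1 = q.1) :=
      mem_filter.mpr ⟨mem_halfEdges.mpr ⟨hqp ▸ hqE, hp⟩, hqp.symm⟩
    exact (mem_filter.mp (hfull ▸ this)).1
  · intro hp
    exact ⟨⟨p, hp, rfl⟩, (mem_halfEdges.mp (hH hp)).2⟩

theorem holantSum_edgeWeights_self (f : ℕ → ℂ) {E : Finset (Sym2 V)}
    (hE : ∀ e ∈ E, ¬e.IsDiag) (z : ℂ) (x : Sym2 V → V → ℂ) :
    holantSum f E (edgeWeights E z x)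
      = ∑ σ ∈ E.powerset, z ^ σ.card * ∏ v, f (σ.filter (v ∈ ·)).card := by
  have hcontr : ∀ H : Finset (Sym2 V × V), ∏ e ∈ E, edgeWeights E z x e (H.filter (·.1 = e))
      = ∏ e ∈ E, contractedWeight z (H.filter (·.1 = e)) :=
    fun H => prod_congr rfl fun e he => by simp [edgeWeights, he]
  simp only [holantSum, hcontr]
  have hterm : ∀ σ ∈ E.powerset, z ^ σ.card * ∏ v, f (σ.filter (v ∈ ·)).card
      = (∏ e ∈ E, contractedWeight z ((halfEdges σ).filter (·.1 = e)))
        * ∏ v, f ((halfEdges σ).filter (·.2 = v)).card := by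
    intro σ hσ
    simp only [prod_contractedWeight_halfEdges (mem_powerset.mp hσ) hE, card_halfEdges_filter_snd]
  symm
  refine sum_bij_ne_zero (fun σ _ _ => halfEdges σ) ?_ ?_ ?_ ?_
  · exact fun σ hσ _ => mem_powerset.mpr (halfEdges_mono (mem_powerset.mp hσ))
  · intro σ₁ _ _ σ₂ _ _ h
    rw [← image_fst_halfEdges σ₁, h, image_fst_halfEdges]
  · intro H hH hne
    have hH := mem_powerset.mp hH
    have hne' : ∀ e ∈ E, contractedWeight z (H.filter (·.1 = e)) ≠ 0 :=
      fun e he => prod_ne_zero_iff.mp (left_ne_zero_of_mul hne) e he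
    have himage : H.image Prod.fst ⊆ E := fun e he => by
      obtain ⟨p, hp, rfl⟩ := mem_image.mp he
      exact (mem_halfEdges.mp (hH hp)).1
    refine ⟨H.image Prod.fst, mem_powerset.mpr himage, ?_, halfEdges_image_fst hE z hH hne'⟩
    rwa [hterm _ (mem_powerset.mpr himage), halfEdges_image_fst hE z hH hne']
  · exact fun σ hσ _ => hterm σ hσ

theorem holantSum_edgeWeights_ne_zero {Δ : ℕ} {f : ℕ → ℂ} {ε : ℝ} (hε : 0 < ε)
    (hf : HStable ε (localPoly Δ f)) {G : SimpleGraph V} [DecidableRel G.Adj]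
    (hreg : G.IsRegularOfDegree Δ) {z : ℂ} (hzi : |z.im| ≤ ε ^ 2 / 2) (hzr : -(ε ^ 2 / 2) ≤ z.re)
    {S : Finset (Sym2 V)} (hS : S ⊆ G.edgeFinset) (x : Sym2 V → V → ℂ)
    (hx : ∀ e v, -ε < (x e v).re) : holantSum f G.edgeFinset (edgeWeights S z x) ≠ 0 := by
  induction S using Finset.induction_on generalizing x with
  | empty =>
    rw [holantSum_edgeWeights_empty]
    refine prod_ne_zero_iff.mpr fun v _ =>
      sum_powerset_mul_prod_ne_zero _ hf ?_ fun _ _ => (hx _ _).le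
    rw [card_halfEdges_filter_snd, ← SimpleGraph.incidenceFinset_eq_filter,
      SimpleGraph.card_incidenceFinset_eq_degree, hreg v]
  | @insert e S heS ih =>
    obtain ⟨u, w, rfl⟩ : ∃ u w, e = s(u, w) := Sym2.ind (fun u w => ⟨u, w, rfl⟩) e
    have he : s(u, w) ∈ G.edgeFinset := hS (mem_insert_self _ _)
    have huw : u ≠ w := (SimpleGraph.mem_edgeFinset.mp he).ne
    have hpair : ((s(u, w), u) : Sym2 V × V) ≠ (s(u, w), w) := by simpa using huw
    obtain ⟨A, B, C, D, hABCD⟩ := holantSum_update (f := f) he huw (edgeWeights S z x)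
    have hfree : ∀ s t : ℂ, -ε < s.re → -ε < t.re → A + B * s + C * t + D * (s * t) ≠ 0 := by
      intro s t hs ht
      have h := ih ((subset_insert _ _).trans hS)
        (Function.update x s(u, w) fun v => if v = u then s else t) fun e' v => by
          by_cases h : e' = s(u, w)
          · subst h; rw [Function.update_self]; split_ifs <;> assumption
          · simpa [h] using hx e' v
      rw [edgeWeights_update heS, hABCD] at h
      simpa [freeWeight, prod_pair hpair, huw.symm, mul_comm] using h
    rw [edgeWeights_insert, hABCD]
    simpa [contractedWeight, card_pair hpair, mul_comm] using asano_contraction_s4 hε hfree hzi hzr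

end Holant

theorem holant_polynomial_zero_free_general (Δ : ℕ) (f : ℕ → ℂ) (ε : ℝ) (hε : 0 < ε)
    (hstable : ∀ z : ℂ, -ε ≤ z.re →
      ∑ i ∈ Finset.range (Δ + 1), (Δ.choose i : ℂ) * f i * z ^ i ≠ 0)
    (V : Type) [Fintype V] [DecidableEq V] (G : SimpleGraph V) [DecidableRel G.Adj]
    (hreg : G.IsRegularOfDegree Δ)
    (z : ℂ) (him : |z.im| ≤ ε ^ 2 / 2) (hre₁ : -(ε ^ 2 / 2) ≤ z.re) :
    ∑ k ∈ Finset.range (G.edgeFinset.card + 1),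
        (∑ σ ∈ G.edgeFinset.powerset.filter (fun σ => σ.card = k),
          ∏ v : V, f ((σ.filter (fun e => v ∈ e)).card)) * z ^ k ≠ 0 := by
  have hf : HStable ε (localPoly Δ f) := fun ζ hζ => by
    rw [eval_localPoly]; exact hstable ζ hζ
  have h := holantSum_edgeWeights_ne_zero hε hf hreg him hre₁ subset_rfl 0
    fun _ _ => by simpa using hε
  rwa [holantSum_edgeWeights_self _
      (fun e he => G.not_isDiag_of_mem_edgeSet (SimpleGraph.mem_edgeFinset.mp he)),
    sum_powerset_mul_pow_card] at h

/-- **Ruelle's method for Holant problems.** If the local polynomial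
`P_f(z) = ∑ C(Δ,i) f_i z^i` of a signature `f` of arity `Δ` is `H_ε`-stable,
then for every finite `Δ`-regular graph `G` the Holant polynomial
`P_G(z) = ∑_k Z_k(G;f) z^k` has no zero in the `δ`-strip of `[0,1]` with `δ = ε²/2`. -/
theorem holant_polynomial_zero_free (Δ : ℕ) (hΔ : 1 ≤ Δ) (f : ℕ → ℂ) (ε : ℝ) (hε : 0 < ε)
    (hstable : ∀ z : ℂ, -ε ≤ z.re →
      ∑ i ∈ Finset.range (Δ + 1), (Δ.choose i : ℂ) * f i * z ^ i ≠ 0)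
    (V : Type) [Fintype V] [DecidableEq V] (G : SimpleGraph V) [DecidableRel G.Adj]
    (hreg : G.IsRegularOfDegree Δ)
    (z : ℂ) (him : |z.im| ≤ ε ^ 2 / 2) (hre₁ : -(ε ^ 2 / 2) ≤ z.re)
    (hre₂ : z.re ≤ 1 + ε ^ 2 / 2) :
    ∑ k ∈ Finset.range (G.edgeFinset.card + 1),
        (∑ σ ∈ G.edgeFinset.powerset.filter (fun σ => σ.card = k),
          ∏ v : V, f ((σ.filter (fun e => v ∈ e)).card)) * z ^ k ≠ 0 :=
  holant_polynomial_zero_free_general Δ f ε hε hstable V G hreg z him hre₁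
end

section
/- Let 0 < δ < 1 and let β = 1 + exp(−1/δ) / (2 − 2·exp(−1/δ)) > 1. Then there exists a polynomial φ with complex coefficients such that: (1) φ(0) = 0 and φ(1) = 1; and (2) for every z ∈ ℂ with |z| ≤ β, the value φ(z) lies in the 2δ-strip of [0,1], i.e., |Im φ(z)| ≤ 2δ and −2δ ≤ Re φ(z) ≤ 1 + 2δ. -/
/-!
With `ε = e^{-1/δ}`, the map `L z = -δ log (1 - (1 - ε) z)` fixes `0` and `1`, and `z ↦ (1 - ε) z`
sends the disk of radius `β` into the disk of radius `1 - ε/2`, because `(1 - ε) β = 1 - ε/2`.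
For `w` in that disk, `Re (1 - w) ≥ 0` gives `|Im L| ≤ δπ/2`, and `ε/2 ≤ |1 - w| ≤ 2` puts `Re L`
within `δ log 2` of `[0, 1]`. A Taylor truncation `p` of `L` is uniformly close to `L` on the disk,
and `p + (1 - p 1) z` fixes `1` at the cost of an extra error `|1 - p 1| β`; with the truncation
error small enough, the total stays below the `(2 - π/2) δ` of room left in the `2δ`-strip.
-/

open Complex Polynomial

def unitIntervalStrip (d : ℝ) : Set ℂ :=
  {z | |z.im| ≤ d ∧ -d ≤ z.re ∧ z.re ≤ 1 + d}

lemma unitIntervalStrip_mono {d d' : ℝ} (h : d ≤ d') :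
    unitIntervalStrip d ⊆ unitIntervalStrip d' := by
  rintro z ⟨him, hre₀, hre₁⟩
  exact ⟨him.trans h, by linarith, by linarith⟩

lemma mem_unitIntervalStrip_of_norm_sub_le {d e : ℝ} {a b : ℂ} (ha : a ∈ unitIntervalStrip d)
    (hab : ‖b - a‖ ≤ e) : b ∈ unitIntervalStrip (d + e) := by
  obtain ⟨him, hre₀, hre₁⟩ := ha
  have him' : |b.im - a.im| ≤ e := (abs_im_le_norm (b - a)).trans hab
  have hre' : |b.re - a.re| ≤ e := (abs_re_le_norm (b - a)).trans hab
  rw [abs_le] at him him' hre'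
  exact ⟨abs_le.mpr ⟨by linarith, by linarith⟩, by linarith, by linarith⟩

lemma abs_im_log_one_sub_le_pi_div_two {w : ℂ} (hw : ‖w‖ ≤ 1) :
    |(log (1 - w)).im| ≤ Real.pi / 2 := by
  rw [log_im, abs_arg_le_pi_div_two_iff, sub_re, one_re, sub_nonneg]
  exact (re_le_norm w).trans hw

lemma log_one_sub_norm_le_re_log_one_sub {w : ℂ} (hw : ‖w‖ < 1) :
    Real.log (1 - ‖w‖) ≤ (log (1 - w)).re := by
  rw [log_re]
  refine Real.log_le_log (by linarith) ?_
  simpa using norm_sub_norm_le (1 : ℂ) w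

lemma re_log_one_sub_le_log_one_add_norm {w : ℂ} (hw : w ≠ 1) :
    (log (1 - w)).re ≤ Real.log (1 + ‖w‖) := by
  rw [log_re]
  refine Real.log_le_log (norm_pos_iff.mpr (sub_ne_zero.mpr hw.symm)) ?_
  simpa using norm_sub_le (1 : ℂ) w

lemma ofReal_mul_neg_log_one_sub_mem_unitIntervalStrip {δ : ℝ} (hδ : 0 < δ) {w : ℂ}
    (hw : ‖w‖ ≤ 1 - Real.exp (-(1 / δ)) / 2) :
    (δ : ℂ) * -log (1 - w) ∈ unitIntervalStrip (δ * (Real.pi / 2)) := by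
  have hε := Real.exp_pos (-(1 / δ))
  have hw1 : ‖w‖ < 1 := by linarith
  have hlog2 : Real.log 2 ≤ Real.pi / 2 := by
    linarith [Real.log_two_lt_d9, Real.pi_gt_three]
  have hlo : Real.log (Real.exp (-(1 / δ)) / 2) ≤ (log (1 - w)).re :=
    (Real.log_le_log (by positivity) (by linarith)).trans
      (log_one_sub_norm_le_re_log_one_sub hw1)
  rw [Real.log_div hε.ne' two_ne_zero, Real.log_exp] at hlo
  have hhi : (log (1 - w)).re ≤ Real.log 2 :=
    (re_log_one_sub_le_log_one_add_norm (by rintro rfl; simp at hw1)).trans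
      (Real.log_le_log (by positivity) (by linarith))
  have him := abs_im_log_one_sub_le_pi_div_two hw1.le
  simp only [unitIntervalStrip, Set.mem_ofPred_eq, re_ofReal_mul, im_ofReal_mul, neg_re, neg_im,
    abs_mul, abs_neg, abs_of_pos hδ]
  refine ⟨by gcongr, ?_, ?_⟩
  · nlinarith
  · have : δ * (1 / δ) = 1 := by field_simp
    nlinarith

lemma norm_one_sub_mul_le_one_sub_half {ε : ℝ} (hε : ε < 1) {z : ℂ}
    (hz : ‖z‖ ≤ 1 + ε / (2 - 2 * ε)) : ‖(1 - (ε : ℂ)) * z‖ ≤ 1 - ε / 2 := by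
  have hαβ : (1 - ε) * (1 + ε / (2 - 2 * ε)) = 1 - ε / 2 := by
    have h : (1 - ε) * (ε / (2 - 2 * ε)) = ε / 2 := by
      rw [mul_div_assoc', div_eq_div_iff (by linarith) two_ne_zero]
      ring
    rw [mul_add, mul_one, h]
    ring
  rw [norm_mul, ← ofReal_one, ← ofReal_sub, norm_real, Real.norm_of_nonneg (by linarith), ← hαβ]
  gcongr

lemma exists_norm_log_one_add_sub_logTaylor_le {r η : ℝ} (hr : r < 1) (hη : 0 < η) :
    ∃ n, ∀ u : ℂ, ‖u‖ ≤ r → ‖log (1 + u) - logTaylor n u‖ ≤ η := by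
  obtain ⟨n, hn⟩ := exists_pow_lt_of_lt_one (mul_pos hη (sub_pos.mpr hr)) hr
  refine ⟨n + 1, fun u hu => ?_⟩
  have hr0 : 0 ≤ r := (norm_nonneg u).trans hu
  have hu1 : ‖u‖ < 1 := hu.trans_lt hr
  calc ‖log (1 + u) - logTaylor (n + 1) u‖
      ≤ ‖u‖ ^ (n + 1) * (1 - ‖u‖)⁻¹ / (n + 1) := norm_log_sub_logTaylor_le n hu1
    _ ≤ ‖u‖ ^ (n + 1) * (1 - ‖u‖)⁻¹ := div_le_self (by positivity) (by linarith)
    _ ≤ r ^ n * (1 - r)⁻¹ := by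
        gcongr ?_ * ?_
        · exact (pow_le_pow_left₀ (norm_nonneg u) hu _).trans
            (pow_le_pow_of_le_one hr0 hr.le n.le_succ)
        · gcongr
    _ ≤ η := by
        rw [← div_eq_mul_inv, div_le_iff₀ (sub_pos.mpr hr)]
        exact hn.le

noncomputable def logTaylorPoly (n : ℕ) : ℂ[X] :=
  ∑ j ∈ Finset.range n, C ((-1 : ℂ) ^ (j + 1) / j) * X ^ j

@[simp]
lemma eval_logTaylorPoly (n : ℕ) (z : ℂ) : (logTaylorPoly n).eval z = logTaylor n z := by
  simp only [logTaylorPoly, logTaylor, eval_finsetSum, eval_mul, eval_C, eval_pow, eval_X]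
  exact Finset.sum_congr rfl fun j _ => by ring

lemma exists_polynomial_norm_eval_sub_mul_neg_log_one_sub_le {r η : ℝ} (hr : r < 1) (hη : 0 < η)
    (a c : ℂ) : ∃ p : ℂ[X], p.eval 0 = 0 ∧
      ∀ z : ℂ, ‖c * z‖ ≤ r → ‖p.eval z - a * -log (1 - c * z)‖ ≤ ‖a‖ * η := by
  obtain ⟨n, hn⟩ := exists_norm_log_one_add_sub_logTaylor_le hr hη
  refine ⟨C (-a) * (logTaylorPoly n).comp (C (-c) * X), by simp [logTaylor_at_zero],
    fun z hz => ?_⟩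
  calc ‖(C (-a) * (logTaylorPoly n).comp (C (-c) * X)).eval z - a * -log (1 - c * z)‖
      = ‖a * (log (1 + -(c * z)) - logTaylor n (-(c * z)))‖ := by
        simp only [eval_mul, eval_C, eval_comp, eval_X, eval_logTaylorPoly]
        ring_nf
    _ ≤ ‖a‖ * η := by
        rw [norm_mul]
        gcongr
        exact hn _ (by rwa [norm_neg])

lemma norm_eval_add_C_mul_X_sub_le {𝕜 : Type*} [NormedField 𝕜] {p : 𝕜[X]} {a z : 𝕜} {η : ℝ}
    (h1 : ‖p.eval 1 - 1‖ ≤ η) (hz : ‖p.eval z - a‖ ≤ η) :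
    ‖(p + C (1 - p.eval 1) * X).eval z - a‖ ≤ η * (1 + ‖z‖) := by
  calc ‖(p + C (1 - p.eval 1) * X).eval z - a‖
      = ‖(p.eval z - a) + (1 - p.eval 1) * z‖ := by
        simp only [eval_add, eval_mul, eval_C, eval_X]
        ring_nf
    _ ≤ ‖p.eval z - a‖ + ‖p.eval 1 - 1‖ * ‖z‖ := by
        rw [← norm_neg (p.eval 1 - 1), neg_sub, ← norm_mul]; exact norm_add_le _ _
    _ ≤ η + η * ‖z‖ := by gcongr
    _ = η * (1 + ‖z‖) := by ring

theorem exists_polynomial_disk_to_strip_general (δ : ℝ) (hδ0 : 0 < δ) :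
    ∃ φ : Polynomial ℂ, φ.eval 0 = 0 ∧ φ.eval 1 = 1 ∧
      ∀ z : ℂ, ‖z‖ ≤ 1 + Real.exp (-(1 / δ)) / (2 - 2 * Real.exp (-(1 / δ))) →
        |(φ.eval z).im| ≤ 2 * δ ∧ -(2 * δ) ≤ (φ.eval z).re ∧ (φ.eval z).re ≤ 1 + 2 * δ := by
  set ε := Real.exp (-(1 / δ))
  set β := 1 + ε / (2 - 2 * ε)
  have hε0 : 0 < ε := Real.exp_pos _
  have hε1 : ε < 1 := Real.exp_lt_one_iff.mpr (by simp [hδ0])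
  have hβ : 1 ≤ β := le_add_of_nonneg_right (div_nonneg hε0.le (by linarith))
  set η := (2 - Real.pi / 2) / (1 + β)
  have hη : 0 < η := div_pos (by linarith [Real.pi_lt_four]) (by linarith)
  obtain ⟨p, hp0, hp⟩ := exists_polynomial_norm_eval_sub_mul_neg_log_one_sub_le
    (r := 1 - ε / 2) (by linarith) hη δ (1 - ε)
  rw [norm_real, Real.norm_of_nonneg hδ0.le] at hp
  have hL1 : (δ : ℂ) * -log (1 - (1 - ε) * 1) = 1 := by
    rw [mul_one, sub_sub_cancel, ← ofReal_log hε0.le, Real.log_exp]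
    push_cast
    field_simp [ofReal_ne_zero.mpr hδ0.ne']
  have hp1 : ‖p.eval 1 - 1‖ ≤ δ * η := by
    simpa only [hL1] using hp 1 (norm_one_sub_mul_le_one_sub_half hε1 (by rwa [norm_one]))
  refine ⟨p + C (1 - p.eval 1) * X, by simp [hp0], by simp, fun z hz => ?_⟩
  have hz' := norm_one_sub_mul_le_one_sub_half hε1 hz
  refine unitIntervalStrip_mono ?_ <| mem_unitIntervalStrip_of_norm_sub_le
    (ofReal_mul_neg_log_one_sub_mem_unitIntervalStrip hδ0 hz')
    (norm_eval_add_C_mul_X_sub_le hp1 (hp z hz'))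
  calc δ * (Real.pi / 2) + δ * η * (1 + ‖z‖) ≤ δ * (Real.pi / 2) + δ * η * (1 + β) := by gcongr
    _ = 2 * δ := by simp only [η]; field_simp; ring

/-- There is a polynomial fixing `0` and `1` that maps the disk of radius
`β = 1 + e^{-1/δ}/(2 - 2e^{-1/δ})` into the `2δ`-strip of `[0,1]`. -/
theorem exists_polynomial_disk_to_strip (δ : ℝ) (hδ0 : 0 < δ) (hδ1 : δ < 1) :
    ∃ φ : Polynomial ℂ, φ.eval 0 = 0 ∧ φ.eval 1 = 1 ∧
      ∀ z : ℂ, ‖z‖ ≤ 1 + Real.exp (-(1 / δ)) / (2 - 2 * Real.exp (-(1 / δ))) →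
        |(φ.eval z).im| ≤ 2 * δ ∧ -(2 * δ) ≤ (φ.eval z).re ∧ (φ.eval z).re ≤ 1 + 2 * δ :=
  exists_polynomial_disk_to_strip_general δ hδ0
end

section
/- Let 0 < δ < 1, set α = 1 − exp(−1/δ) and β = (1+α)/(2α), and define h(z) = −δ·Log(1 − αz), where Log denotes the principal branch of the complex logarithm. Then for every z ∈ ℂ with |z| ≤ β one has 1 − αz ≠ 0, and moreover −δ·log 2 ≤ Re h(z) ≤ 1 + δ·log 2 and |Im h(z)| ≤ (π/2)·δ. -/
/-!
For `|z| ≤ β` we have `|αz| ≤ (1+α)/2 < 1`, so `w = 1 - αz` lies in the half-plane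
`Re w ≥ (1-α)/2 = e^{-1/δ}/2 > 0` and in the disk `|w| ≤ 2`. On such `w`, `Re Log w = log |w|`
is squeezed between `-1/δ - log 2` and `log 2`, and `|Im Log w| = |arg w| ≤ π/2`;
multiplying by `-δ` gives the strip.
-/

open Complex

lemma one_sub_ofReal_mul_re_ge {a r : ℝ} {z : ℂ} (ha : 0 ≤ a) (h : a * ‖z‖ ≤ r) :
    1 - r ≤ (1 - (a : ℂ) * z).re := by
  have : a * z.re ≤ a * ‖z‖ := mul_le_mul_of_nonneg_left (re_le_norm z) ha
  simp only [sub_re, one_re, re_ofReal_mul]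
  linarith

lemma norm_one_sub_ofReal_mul_le {a r : ℝ} {z : ℂ} (ha : 0 ≤ a) (h : a * ‖z‖ ≤ r) :
    ‖1 - (a : ℂ) * z‖ ≤ 1 + r :=
  calc ‖1 - (a : ℂ) * z‖ ≤ ‖(1 : ℂ)‖ + ‖(a : ℂ) * z‖ := norm_sub_le _ _
    _ = 1 + a * ‖z‖ := by rw [norm_one, norm_mul, norm_real, Real.norm_of_nonneg ha]
    _ ≤ 1 + r := by linarith

lemma neg_ofReal_mul_log_re_mem {δ c R : ℝ} {w : ℂ} (hδ : 0 ≤ δ) (hc : 0 < c) (hcw : c ≤ w.re)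
    (hwR : ‖w‖ ≤ R) :
    -(δ * Real.log R) ≤ (-(δ : ℂ) * log w).re ∧ (-(δ : ℂ) * log w).re ≤ -(δ * Real.log c) := by
  have hcw' : c ≤ ‖w‖ := hcw.trans (re_le_norm w)
  have hlogR : Real.log ‖w‖ ≤ Real.log R := Real.log_le_log (hc.trans_le hcw') hwR
  have hlogc : Real.log c ≤ Real.log ‖w‖ := Real.log_le_log hc hcw'
  rw [neg_mul, neg_re, re_ofReal_mul, log_re]
  constructor <;> nlinarith

lemma abs_neg_ofReal_mul_log_im_le {δ : ℝ} {w : ℂ} (hδ : 0 ≤ δ) (hw : 0 ≤ w.re) :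
    |(-(δ : ℂ) * log w).im| ≤ Real.pi / 2 * δ := by
  rw [neg_mul, neg_im, im_ofReal_mul, log_im, abs_neg, abs_mul, abs_of_nonneg hδ, mul_comm]
  exact mul_le_mul_of_nonneg_right (abs_arg_le_pi_div_two_iff.mpr hw) hδ

theorem log_map_disk_to_strip_general (δ : ℝ) (hδ0 : 0 < δ) (z : ℂ)
    (hz : ‖z‖ ≤
      (1 + (1 - Real.exp (-(1 / δ)))) / (2 * (1 - Real.exp (-(1 / δ))))) :
    1 - ((1 - Real.exp (-(1 / δ)) : ℝ) : ℂ) * z ≠ 0 ∧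
    -(δ * Real.log 2) ≤
      (-(δ : ℂ) * Complex.log (1 - ((1 - Real.exp (-(1 / δ)) : ℝ) : ℂ) * z)).re ∧
    (-(δ : ℂ) * Complex.log (1 - ((1 - Real.exp (-(1 / δ)) : ℝ) : ℂ) * z)).re ≤
      1 + δ * Real.log 2 ∧
    |(-(δ : ℂ) * Complex.log (1 - ((1 - Real.exp (-(1 / δ)) : ℝ) : ℂ) * z)).im| ≤
      Real.pi / 2 * δ := by
  set ε := Real.exp (-(1 / δ))
  have hε0 : 0 < ε := Real.exp_pos _
  have hε1 : ε < 1 := Real.exp_lt_one_iff.mpr (neg_lt_zero.mpr (by positivity))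
  have hαz : (1 - ε) * ‖z‖ ≤ (1 + (1 - ε)) / 2 := by
    rw [le_div_iff₀ (by linarith)] at hz
    rw [le_div_iff₀ two_pos]
    linarith
  have hre : ε / 2 ≤ (1 - ((1 - ε : ℝ) : ℂ) * z).re := by
    have := one_sub_ofReal_mul_re_ge (by linarith) hαz
    linarith
  have hnorm : ‖1 - ((1 - ε : ℝ) : ℂ) * z‖ ≤ 2 := by
    have := norm_one_sub_ofReal_mul_le (by linarith) hαz
    linarith
  have hlogε : -(δ * Real.log (ε / 2)) = 1 + δ * Real.log 2 := by
    rw [Real.log_div hε0.ne' two_ne_zero, Real.log_exp]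
    field_simp
    ring
  obtain ⟨hlower, hupper⟩ := neg_ofReal_mul_log_re_mem hδ0.le (by positivity) hre hnorm
  refine ⟨fun h0 => ?_, hlower, hlogε ▸ hupper,
    abs_neg_ofReal_mul_log_im_le hδ0.le (by linarith)⟩
  rw [h0, zero_re] at hre
  linarith

/-- Properties of `h(z) = -δ Log(1 - αz)` with `α = 1 - e^{-1/δ}` and `β = (1+α)/(2α)`:
on the disk `|z| ≤ β` one has `1 - αz ≠ 0`, `-δ log 2 ≤ Re h(z) ≤ 1 + δ log 2`
and `|Im h(z)| ≤ (π/2)δ`. -/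
theorem log_map_disk_to_strip (δ : ℝ) (hδ0 : 0 < δ) (hδ1 : δ < 1) (z : ℂ)
    (hz : ‖z‖ ≤
      (1 + (1 - Real.exp (-(1 / δ)))) / (2 * (1 - Real.exp (-(1 / δ))))) :
    1 - ((1 - Real.exp (-(1 / δ)) : ℝ) : ℂ) * z ≠ 0 ∧
    -(δ * Real.log 2) ≤
      (-(δ : ℂ) * Complex.log (1 - ((1 - Real.exp (-(1 / δ)) : ℝ) : ℂ) * z)).re ∧
    (-(δ : ℂ) * Complex.log (1 - ((1 - Real.exp (-(1 / δ)) : ℝ) : ℂ) * z)).re ≤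
      1 + δ * Real.log 2 ∧
    |(-(δ : ℂ) * Complex.log (1 - ((1 - Real.exp (-(1 / δ)) : ℝ) : ℂ) * z)).im| ≤
      Real.pi / 2 * δ :=
  log_map_disk_to_strip_general δ hδ0 z hz
end

section
/- Let d ≥ 3 be an odd integer and let p, q, s, t be real numbers with p² + q² = s² + t² and p·s + q·t < 0. Define f_i = p^{d−i}·q^i + s^{d−i}·t^i for 0 ≤ i ≤ d, and suppose f_i ≥ 0 for all 0 ≤ i ≤ d and that not all f_i are zero. Then there exist a real number λ > 1 and a real number μ ≠ 0 such that either (for all 0 ≤ i ≤ d: f_i = μ·λ^i if i is even, and f_i = 0 if i is odd) or (for all 0 ≤ i ≤ d: f_{d−i} = μ·λ^i if i is even, and f_{d−i} = 0 if i is odd). -/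
set_option maxHeartbeats 1000000

private lemma odd_aux2 (n : ℕ) (hn : n ≠ 0) (p q s t : ℝ) (hq : 0 ≤ q) (ht : 0 ≤ t)
    (hs : s < 0) (ha : 0 < p + s)
    (hnorm : p ^ 2 + q ^ 2 = s ^ 2 + t ^ 2) (hneg : p * s + q * t < 0)
    (hd1 : 0 ≤ p * q ^ (n + 1) + s * t ^ (n + 1)) : False := by
  have hp : 0 < p := by linarith
  have hps2 : s ^ 2 < p ^ 2 := by nlinarith [mul_pos ha (show (0:ℝ) < p - s by linarith)]
  have htq : q < t := by nlinarith
  have ht0 : 0 < t := lt_of_le_of_lt hq htq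
  rcases eq_or_lt_of_le hq with hq0 | hq0
  · have hz : q ^ (n + 1) = 0 := by rw [← hq0]; exact zero_pow (by omega)
    rw [hz, mul_zero, zero_add] at hd1
    have : s * t ^ (n + 1) < 0 := mul_neg_of_neg_of_pos hs (pow_pos ht0 _)
    linarith
  · have hqt : 0 ≤ q * t := mul_nonneg hq ht
    have hps0 : p * s < 0 := mul_neg_of_pos_of_neg hp hs
    have h2 : (q * t) ^ 2 < (p * s) ^ 2 := by
      nlinarith [mul_pos (show (0:ℝ) < -(p * s + q * t) by linarith)
        (show (0:ℝ) < q * t - p * s by linarith)]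
    have hid : (p * s) ^ 2 - (q * t) ^ 2 = (p ^ 2 + q ^ 2) * (s ^ 2 - q ^ 2) := by
      linear_combination (q ^ 2) * hnorm
    have hpos : (0:ℝ) < p ^ 2 + q ^ 2 := by positivity
    have h3 : q ^ 2 < s ^ 2 := by nlinarith
    have h4 : t ^ 2 < p ^ 2 := by linarith
    have hid2 : (s * t) ^ 2 - (p * q) ^ 2 = (t ^ 2 - q ^ 2) * (p ^ 2 - t ^ 2) := by
      linear_combination (-(t ^ 2)) * hnorm
    have hpq : 0 < p * q := mul_pos hp hq0
    have hst : s * t < 0 := mul_neg_of_neg_of_pos hs ht0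
    have hfac : (0:ℝ) < (t ^ 2 - q ^ 2) * (p ^ 2 - t ^ 2) := by
      apply mul_pos <;> nlinarith
    have h5 : p * q < -(s * t) := by nlinarith
    have lq : q ^ n ≤ t ^ n := pow_le_pow_left₀ hq htq.le n
    have l1 : (p * q) * q ^ n ≤ (p * q) * t ^ n := mul_le_mul_of_nonneg_left lq hpq.le
    have l2 : (p * q) * t ^ n < (-(s * t)) * t ^ n :=
      mul_lt_mul_of_pos_right h5 (pow_pos ht0 n)
    have e1 : p * q ^ (n + 1) = (p * q) * q ^ n := by ring
    have e2 : s * t ^ (n + 1) = -((-(s * t)) * t ^ n) := by ring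
    linarith

private lemma odd_aux3 (n : ℕ) (hn : n ≠ 0) (p q s t : ℝ) (ht : t < 0) (hp : 0 ≤ p)
    (hs : 0 ≤ s) (hb : 0 < q + t)
    (hnorm : p ^ 2 + q ^ 2 = s ^ 2 + t ^ 2) (hneg : p * s + q * t < 0)
    (h1 : 0 ≤ p ^ (n + 1) * q + s ^ (n + 1) * t) : False := by
  have hq : 0 < q := by linarith
  have hq2 : t ^ 2 < q ^ 2 := by
    nlinarith [mul_pos hb (show (0:ℝ) < q - t by linarith)]
  have hsp : p < s := by nlinarith
  have hs0 : 0 < s := lt_of_le_of_lt hp hsp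
  rcases eq_or_lt_of_le hp with hp0 | hp0
  · have hz : p ^ (n + 1) = 0 := by rw [← hp0]; exact zero_pow (by omega)
    rw [hz, zero_mul, zero_add] at h1
    have : s ^ (n + 1) * t < 0 := mul_neg_of_pos_of_neg (pow_pos hs0 _) ht
    linarith
  · have hps : 0 ≤ p * s := mul_nonneg hp hs
    have hqt0 : q * t < 0 := mul_neg_of_pos_of_neg hq ht
    have h2 : (p * s) ^ 2 < (q * t) ^ 2 := by
      nlinarith [mul_pos (show (0:ℝ) < -(p * s + q * t) by linarith)
        (show (0:ℝ) < p * s - q * t by nlinarith [mul_nonneg hp hs])]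
    have hid : (q * t) ^ 2 - (p * s) ^ 2 = (p ^ 2 + q ^ 2) * (q ^ 2 - s ^ 2) := by
      linear_combination (-(q ^ 2)) * hnorm
    have hpos : (0:ℝ) < p ^ 2 + q ^ 2 := by positivity
    have h3 : s ^ 2 < q ^ 2 := by nlinarith
    have h4 : p ^ 2 < t ^ 2 := by linarith
    have hid2 : (s * t) ^ 2 - (p * q) ^ 2 = (q ^ 2 - s ^ 2) * (s ^ 2 - p ^ 2) := by
      linear_combination (-(s ^ 2)) * hnorm
    have hsp2 : p ^ 2 < s ^ 2 := by linarith
    have hpq : 0 < p * q := mul_pos hp0 hq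
    have hst : s * t < 0 := mul_neg_of_pos_of_neg hs0 ht
    have hfac : (0:ℝ) < (q ^ 2 - s ^ 2) * (s ^ 2 - p ^ 2) := by
      apply mul_pos <;> nlinarith
    have h5 : p * q < -(s * t) := by nlinarith
    have lp : p ^ n ≤ s ^ n := pow_le_pow_left₀ hp hsp.le n
    have l1 : (p * q) * p ^ n ≤ (p * q) * s ^ n := mul_le_mul_of_nonneg_left lp hpq.le
    have l2 : (p * q) * s ^ n < (-(s * t)) * s ^ n :=
      mul_lt_mul_of_pos_right h5 (pow_pos hs0 n)
    have e1 : p ^ (n + 1) * q = (p * q) * p ^ n := by ring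
    have e2 : s ^ (n + 1) * t = -((-(s * t)) * s ^ n) := by ring
    linarith

private lemma odd_aux4 (n : ℕ) (hn : Odd n) (p q s t : ℝ) (hp : p < 0) (ht : t < 0)
    (ha : 0 < p + s) (hb : 0 < q + t)
    (h1 : 0 ≤ p ^ (n + 1) * q + s ^ (n + 1) * t)
    (hd1 : 0 ≤ p * q ^ (n + 1) + s * t ^ (n + 1)) : False := by
  have hs : 0 < s := by linarith
  have hq : 0 < q := by linarith
  have hP : 0 < -p := by linarith
  have hT : 0 < -t := by linarith
  have hEn1 : Even (n + 1) := hn.add_one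
  have h1' : s ^ (n + 1) * (-t) ≤ (-p) ^ (n + 1) * q := by
    rw [hEn1.neg_pow p]
    have e : s ^ (n + 1) * (-t) = -(s ^ (n + 1) * t) := by ring
    linarith
  have hd1' : (-p) * q ^ (n + 1) ≤ s * (-t) ^ (n + 1) := by
    rw [hEn1.neg_pow t]
    have e : (-p) * q ^ (n + 1) = -(p * q ^ (n + 1)) := by ring
    linarith
  have prod := mul_le_mul h1' hd1'
    (mul_nonneg hP.le (pow_nonneg hq.le _))
    (mul_nonneg (pow_nonneg hP.le _) hq.le)
  have r1 : (s * q) ^ (n + 1) * ((-p) * (-t)) = (s ^ (n + 1) * (-t)) * ((-p) * q ^ (n + 1)) := by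
    ring
  have r2 : ((-p) * (-t)) ^ (n + 1) * (s * q) = ((-p) ^ (n + 1) * q) * (s * (-t) ^ (n + 1)) := by
    rw [show ((-p) * (-t) : ℝ) = p * t from by ring, hEn1.neg_pow p, hEn1.neg_pow t]; ring
  have key : (s * q) ^ (n + 1) * ((-p) * (-t)) ≤ ((-p) * (-t)) ^ (n + 1) * (s * q) := by
    rw [r1, r2]; exact prod
  have hAB : (-p) * (-t) < s * q :=
    mul_lt_mul'' (by linarith) (by linarith) hP.le hT.le
  have hpow : ((-p) * (-t)) ^ n < (s * q) ^ n :=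
    pow_lt_pow_left₀ hAB (mul_pos hP hT).le hn.pos.ne'
  have hc : (0:ℝ) < ((-p) * (-t)) * (s * q) := mul_pos (mul_pos hP hT) (mul_pos hs hq)
  have step := mul_lt_mul_of_pos_right hpow hc
  have r3 : ((-p) * (-t)) ^ (n + 1) * (s * q) = ((-p) * (-t)) ^ n * (((-p) * (-t)) * (s * q)) := by
    ring
  have r4 : (s * q) ^ (n + 1) * ((-p) * (-t)) = (s * q) ^ n * (((-p) * (-t)) * (s * q)) := by
    ring
  linarith

private lemma odd_dich (n : ℕ) (hn : Odd n) (p q s t : ℝ)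
    (hnorm : p ^ 2 + q ^ 2 = s ^ 2 + t ^ 2) (hneg : p * s + q * t < 0)
    (ha : 0 ≤ p + s) (hb : 0 ≤ q + t)
    (h1 : 0 ≤ p ^ (n + 1) * q + s ^ (n + 1) * t)
    (hd1 : 0 ≤ p * q ^ (n + 1) + s * t ^ (n + 1)) :
    p + s = 0 ∨ q + t = 0 := by
  by_contra hcon
  push_neg at hcon
  have ha' : 0 < p + s := lt_of_le_of_ne ha (Ne.symm hcon.1)
  have hb' : 0 < q + t := lt_of_le_of_ne hb (Ne.symm hcon.2)
  have hn0 : n ≠ 0 := hn.pos.ne'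
  rcases le_or_gt 0 q with hq | hq <;> rcases le_or_gt 0 t with ht | ht
  · rcases le_or_gt 0 s with hs | hs
    · rcases le_or_gt 0 p with hp | hp
      · linarith [mul_nonneg hp hs, mul_nonneg hq ht]
      · exact odd_aux2 n hn0 s t p q ht hq hp (by linarith) hnorm.symm
          (by rw [mul_comm s p, mul_comm t q]; exact hneg) (by linarith)
    · exact odd_aux2 n hn0 p q s t hq ht hs ha' hnorm hneg hd1
  · rcases le_or_gt 0 p with hp | hp
    · rcases le_or_gt 0 s with hs | hs
      · exact odd_aux3 n hn0 p q s t ht hp hs hb' hnorm hneg h1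
      · nlinarith [mul_pos (show (0:ℝ) < p - s by linarith) ha',
          mul_pos (show (0:ℝ) < q - t by linarith) hb']
    · exact odd_aux4 n hn p q s t hp ht ha' hb' h1 hd1
  · rcases le_or_gt 0 s with hs | hs
    · rcases le_or_gt 0 p with hp | hp
      · exact odd_aux3 n hn0 s t p q hq hs hp (by linarith) hnorm.symm
          (by rw [mul_comm s p, mul_comm t q]; exact hneg) (by linarith)
      · nlinarith [mul_pos (show (0:ℝ) < s - p by linarith) ha',
          mul_pos (show (0:ℝ) < t - q by linarith) hb']
    · exact odd_aux4 n hn s t p q hs hq (by linarith) (by linarith)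
        (by linarith) (by linarith)
  · linarith

private lemma odd_allzero (d : ℕ) (hodd : Odd d) (p q : ℝ) (i : ℕ) (hi : i ≤ d) :
    p ^ (d - i) * q ^ i + (-p) ^ (d - i) * (-q) ^ i = 0 := by
  have h : (-p) ^ (d - i) * (-q) ^ i = -(p ^ (d - i) * q ^ i) := by
    have e : (-1 : ℝ) ^ (d - i) * (-1 : ℝ) ^ i = -1 := by
      rw [← pow_add, Nat.sub_add_cancel hi]
      exact hodd.neg_one_pow
    calc (-p) ^ (d - i) * (-q) ^ i
        = ((-1 : ℝ) ^ (d - i) * (-1 : ℝ) ^ i) * (p ^ (d - i) * q ^ i) := by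
          rw [show (-p : ℝ) = (-1) * p from by ring, show (-q : ℝ) = (-1) * q from by ring,
            mul_pow, mul_pow]; ring
      _ = -(p ^ (d - i) * q ^ i) := by rw [e]; ring
  rw [h]; ring

/-- If `d ≥ 3` is odd, `p² + q² = s² + t²`, `ps + qt < 0`, and the signature
`f_i = p^{d-i} q^i + s^{d-i} t^i` is nonnegative and not identically zero, then `f` or its
reversal is, up to a nonzero scalar, `[1, 0, λ², 0, λ⁴, 0, …, λ^{d-1}, 0]` for some `λ > 1`. -/
theorem odd_tensor_signature_form (d : ℕ) (hd : 3 ≤ d) (hodd : Odd d)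
    (p q s t : ℝ) (hnorm : p ^ 2 + q ^ 2 = s ^ 2 + t ^ 2) (hneg : p * s + q * t < 0)
    (f : ℕ → ℝ) (hf : ∀ i ≤ d, f i = p ^ (d - i) * q ^ i + s ^ (d - i) * t ^ i)
    (hnn : ∀ i ≤ d, 0 ≤ f i) (hnz : ¬ ∀ i ≤ d, f i = 0) :
    ∃ lam : ℝ, 1 < lam ∧ ∃ μ : ℝ, μ ≠ 0 ∧
      ((∀ i ≤ d, (Even i → f i = μ * lam ^ i) ∧ (Odd i → f i = 0)) ∨
       (∀ i ≤ d, (Even i → f (d - i) = μ * lam ^ i) ∧ (Odd i → f (d - i) = 0))) := by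
  have hf0 : f 0 = p ^ d + s ^ d := by
    rw [hf 0 (Nat.zero_le d)]; simp
  have hfd : f d = q ^ d + t ^ d := by
    rw [hf d le_rfl]; simp
  have hf1 : f 1 = p ^ (d - 1) * q + s ^ (d - 1) * t := by
    rw [hf 1 (by omega)]; ring
  have hfd1 : f (d - 1) = p * q ^ (d - 1) + s * t ^ (d - 1) := by
    rw [hf (d - 1) (Nat.sub_le d 1), (show d - (d - 1) = 1 by omega)]; ring
  set n := d - 2 with hn
  have hd1n : d - 1 = n + 1 := by omega
  have hOn : Odd n := by
    obtain ⟨j, hj⟩ := hodd; exact ⟨j - 1, by omega⟩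
  have ha : 0 ≤ p + s := by
    have h := hnn 0 (Nat.zero_le d)
    rw [hf0] at h
    have h2 : (-s) ^ d ≤ p ^ d := by rw [hodd.neg_pow]; linarith
    have h3 := (Odd.strictMono_pow (R := ℝ) hodd).le_iff_le.1 h2
    linarith
  have hb : 0 ≤ q + t := by
    have h := hnn d le_rfl
    rw [hfd] at h
    have h2 : (-t) ^ d ≤ q ^ d := by rw [hodd.neg_pow]; linarith
    have h3 := (Odd.strictMono_pow (R := ℝ) hodd).le_iff_le.1 h2
    linarith
  have h1 := hnn 1 (by omega)
  rw [hf1, hd1n] at h1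
  have hd1 := hnn (d - 1) (Nat.sub_le d 1)
  rw [hfd1, hd1n] at hd1
  have hEn1 : Even (n + 1) := hOn.add_one
  have hnzero : ¬(s = -p ∧ t = -q) := by
    rintro ⟨hs', ht'⟩
    apply hnz
    intro i hi
    rw [hf i hi, hs', ht']
    exact odd_allzero d hodd p q i hi
  rcases odd_dich n hOn p q s t hnorm hneg ha hb h1 hd1 with hps | hqt
  · -- p + s = 0, so s = -p; then t = q
    have hs' : s = -p := by linarith
    subst hs'
    have e : (t - q) * (t + q) = 0 := by linear_combination (-1 : ℝ) * hnorm
    rcases mul_eq_zero.1 e with e1 | e2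
    · -- t = q
      have ht' : q = t := by linarith
      subst ht'
      have hq2 : q ^ 2 < p ^ 2 := by nlinarith
      have hp0 : p ≠ 0 := by intro h; rw [h] at hq2; nlinarith [sq_nonneg q]
      have hpn1 : 0 < p ^ (n + 1) := hEn1.pow_pos hp0
      have hq0 : 0 ≤ q := by
        rw [hEn1.neg_pow p] at h1
        nlinarith
      have hqpos : 0 < q := by
        rcases eq_or_lt_of_le hq0 with h | h
        · exfalso; apply hnz; intro i hi
          rw [hf i hi, ← h]
          rcases Nat.eq_zero_or_pos i with hi0 | hi0
          · rw [hi0]; simp [Nat.sub_zero, hodd.neg_pow]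
          · rw [zero_pow hi0.ne']; ring
        · exact h
      have hlt : q < |p| := by nlinarith [abs_nonneg p, sq_abs p]
      refine ⟨|p| / q, (one_lt_div hqpos).2 hlt, 2 * q ^ d, by positivity, Or.inr ?_⟩
      intro i hi
      have hdi : d - i ≤ d := Nat.sub_le d i
      have hddi : d - (d - i) = i := by omega
      constructor
      · intro hie
        rw [hf (d - i) hdi, hddi, hie.neg_pow p]
        have e2' : |p| ^ i = p ^ i := hie.pow_abs p
        have e3 : q ^ (d - i) * q ^ i = q ^ d := by
          rw [← pow_add, Nat.sub_add_cancel hi]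
        have key : (2 * q ^ d) * ((|p| / q) ^ i) = 2 * p ^ i * q ^ (d - i) := by
          rw [div_pow, e2', ← e3]; field_simp
        rw [key]; ring
      · intro hio
        rw [hf (d - i) hdi, hddi, hio.neg_pow p]; ring
    · -- t = -q : everything zero, contradiction
      exact absurd ⟨rfl, by linarith⟩ hnzero
  · -- q + t = 0, so t = -q; then s = p
    have ht' : t = -q := by linarith
    subst ht'
    have e : (s - p) * (s + p) = 0 := by linear_combination (-1 : ℝ) * hnorm
    rcases mul_eq_zero.1 e with e1 | e2
    · -- s = p
      have hs' : p = s := by linarith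
      subst hs'
      have hp2 : p ^ 2 < q ^ 2 := by nlinarith
      have hq0 : q ≠ 0 := by intro h; rw [h] at hp2; nlinarith [sq_nonneg p]
      have hqn1 : 0 < q ^ (n + 1) := hEn1.pow_pos hq0
      have hp0 : 0 ≤ p := by
        rw [hEn1.neg_pow q] at hd1
        nlinarith
      have hppos : 0 < p := by
        rcases eq_or_lt_of_le hp0 with h | h
        · exfalso; apply hnz; intro i hi
          rw [hf i hi, ← h]
          rcases Nat.lt_or_ge i d with hid | hid
          · rw [(show (0:ℝ) ^ (d - i) = 0 from zero_pow (by omega))]; ring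
          · have : i = d := le_antisymm hi hid
            rw [this]; simp [Nat.sub_self, hodd.neg_pow]
        · exact h
      have hlt : p < |q| := by nlinarith [abs_nonneg q, sq_abs q]
      refine ⟨|q| / p, (one_lt_div hppos).2 hlt, 2 * p ^ d, by positivity, Or.inl ?_⟩
      intro i hi
      constructor
      · intro hie
        rw [hf i hi, hie.neg_pow q]
        have e2' : |q| ^ i = q ^ i := hie.pow_abs q
        have e3 : p ^ (d - i) * p ^ i = p ^ d := by
          rw [← pow_add, Nat.sub_add_cancel hi]
        have key : (2 * p ^ d) * ((|q| / p) ^ i) = 2 * p ^ (d - i) * q ^ i := by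
          rw [div_pow, e2', ← e3]; field_simp
        rw [key]; ring
      · intro hio
        rw [hf i hi, hio.neg_pow q]; ring
    · -- s = -p : everything zero, contradiction
      exact absurd ⟨by linarith, rfl⟩ hnzero
end

section
/- Let d ≥ 1, let p, q, s, t ∈ ℝ satisfy p·t ≠ q·s, p² + q² ≠ s² + t², and q² ≠ t², and let r ∈ {1, −1}. Then there exists w ∈ ℝ such that every complex zero of the polynomial z ↦ (q + p·w + (p − q·w)·z)^d + r·(t + s·w + (s − t·w)·z)^d has strictly negative real part; moreover p − q·w ≠ 0 and s − t·w ≠ 0, so this polynomial has degree exactly d. -/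
/-!
Put `P = p + qi`, `S = s + ti` and `a + bi = (1 + wi) P`, `c + ei = (1 + wi) S`, so that the
polynomial is `(b + az)^d + r (e + cz)^d`. Its zeros satisfy `|b + az| = |e + cz|`, a circle
contained in the open left half-plane once `(a - c)(b - e) > 0` and `(a + c)(b + e) > 0`, i.e.
`Im ((1 + wi)² (P ∓ S)²) > 0`. As `w` runs over `ℝ`, `(1 + wi)²` takes every direction except the
negative one, and the direction `ζ = m · conj (P S)` with `m = (|P|² - |S|²) Im (P conj S)` gives
`Im (ζ (P ∓ S)²) = m² > 0` while making `ζ P S` real, which forces `a, c ≠ 0`. If `ζ` is a negative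
real, every large enough `w` works instead.
-/

open Complex ComplexConjugate Filter

lemma re_neg_of_norm_add_mul_eq {a b c e : ℝ} (hminus : 0 < (a - c) * (b - e))
    (hplus : 0 < (a + c) * (b + e)) {z : ℂ} (hz : ‖(b : ℂ) + a * z‖ = ‖(e : ℂ) + c * z‖) :
    z.re < 0 := by
  have hsq : (b + a * z.re) ^ 2 + (a * z.im) ^ 2 = (e + c * z.re) ^ 2 + (c * z.im) ^ 2 := by
    have := congrArg (· ^ 2) hz
    simp only [Complex.sq_norm, normSq_apply, add_re, add_im, mul_re, mul_im, ofReal_re,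
      ofReal_im] at this
    linear_combination this
  have hPb : 0 < (a ^ 2 - c ^ 2) * (b ^ 2 - e ^ 2) := by
    linear_combination mul_pos hminus hplus
  have hPQ : 0 < (a ^ 2 - c ^ 2) * (a * b - c * e) := by
    have hK : 0 < a * b + c * e := by linear_combination (hminus + hplus) / 2
    have hac : 0 < a ^ 2 + c ^ 2 := by
      by_contra h
      nlinarith [sq_nonneg a, sq_nonneg c]
    have : 0 < (a ^ 2 - c ^ 2) * (a * b - c * e) * (2 * (a * b + c * e)) := by
      have := mul_nonneg (sq_nonneg (a ^ 2 - c ^ 2)) (add_nonneg (sq_nonneg b) (sq_nonneg e))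
      linear_combination this + mul_pos hac hPb
    exact pos_of_mul_pos_left this (mul_pos two_pos hK).le
  have hre : 2 * ((a ^ 2 - c ^ 2) * (a * b - c * e)) * z.re
      = -((a ^ 2 - c ^ 2) ^ 2 * (z.re ^ 2 + z.im ^ 2)) - (a ^ 2 - c ^ 2) * (b ^ 2 - e ^ 2) := by
    linear_combination (a ^ 2 - c ^ 2) * hsq
  by_contra! hx
  nlinarith [mul_nonneg hPQ.le hx, sq_nonneg z.re, sq_nonneg z.im, sq_nonneg (a ^ 2 - c ^ 2)]

lemma norm_eq_of_pow_add_mul_pow_eq_zero {u v r : ℂ} {d : ℕ} (hd : d ≠ 0) (hr : ‖r‖ = 1)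
    (h : u ^ d + r * v ^ d = 0) : ‖u‖ = ‖v‖ := by
  have : ‖u‖ ^ d = ‖v‖ ^ d := by
    rw [← norm_pow, ← norm_pow, eq_neg_of_add_eq_zero_left h, norm_neg, norm_mul, hr, one_mul]
  exact (pow_left_inj₀ (norm_nonneg _) (norm_nonneg _) hd).mp this

-- The half-angle substitution `w = tan (arg ζ / 2)`.
lemma one_add_mul_I_sq {ζ : ℂ} (h : 0 < ‖ζ‖ + ζ.re) :
    (1 + ((ζ.im / (‖ζ‖ + ζ.re) : ℝ) : ℂ) * I) ^ 2 = ((2 / (‖ζ‖ + ζ.re) : ℝ) : ℂ) * ζ := by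
  have hn : ‖ζ‖ ^ 2 = ζ.re ^ 2 + ζ.im ^ 2 := by rw [Complex.sq_norm, normSq_apply]; ring
  apply Complex.ext <;>
    simp only [sq, mul_re, mul_im, add_re, add_im, one_re, one_im, ofReal_re, ofReal_im, I_re,
      I_im] <;> field_simp
  · linear_combination hn
  · ring

-- `Im (conj (P S) (P² + S²)) = (|P|² - |S|²) Im (P conj S)`, whence the real factor.
def balancingDirection (P S : ℂ) : ℂ :=
  ((normSq P - normSq S) * (P * conj S).im : ℝ) * conj (P * S)

lemma im_balancingDirection_mul_mul (P S : ℂ) : (balancingDirection P S * (P * S)).im = 0 := by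
  simp only [balancingDirection, normSq_apply, mul_re, mul_im, conj_re, conj_im, ofReal_re,
    ofReal_im, map_mul]
  ring

lemma im_balancingDirection_mul_add_sq (P S : ℂ) :
    (balancingDirection P S * (P + S) ^ 2).im =
      ((normSq P - normSq S) * (P * conj S).im) ^ 2 := by
  simp only [balancingDirection, normSq_apply, sq, mul_re, mul_im, add_re, add_im, conj_re,
    conj_im, ofReal_re, ofReal_im, map_mul]
  ring

lemma im_balancingDirection_mul_sub_sq (P S : ℂ) :
    (balancingDirection P S * (P - S) ^ 2).im =
      ((normSq P - normSq S) * (P * conj S).im) ^ 2 := by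
  simp only [balancingDirection, normSq_apply, sq, mul_re, mul_im, sub_re, sub_im, conj_re,
    conj_im, ofReal_re, ofReal_im, map_mul]
  ring

lemma eq_zero_of_re_eq_zero_of_im_mul_eq_zero {u v : ℂ} (huv : (u * v).im = 0)
    (hpos : 0 < ((u + v) ^ 2).im) (hu : u.re = 0) : u = 0 := by
  have hv : v.re ≠ 0 := by
    intro hv
    simp [sq, hu, hv] at hpos
  simp only [mul_im, hu, zero_mul, zero_add, mul_eq_zero, hv, or_false] at huv
  exact Complex.ext hu huv

lemma eventually_atTop_im_sq_pos {U : ℂ} (hU : (U ^ 2).im < 0) :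
    ∀ᶠ w : ℝ in atTop, 0 < (((1 + w * I) * U) ^ 2).im := by
  have hlin : Tendsto (fun w : ℝ => -(U ^ 2).im * w + 2 * (U ^ 2).re) atTop atTop :=
    tendsto_atTop_add_const_right _ _ (tendsto_id.const_mul_atTop (neg_pos.2 hU))
  have hquad := tendsto_atTop_add_const_right _ (U ^ 2).im (tendsto_id.atTop_mul_atTop₀ hlin)
  filter_upwards [hquad.eventually_gt_atTop 0] with w hw
  simp only [id_eq, sq, mul_re, mul_im, add_re, add_im, one_re, one_im, ofReal_re, ofReal_im,
    I_re, I_im] at hw ⊢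
  nlinarith

lemma eventually_atTop_re_ne_zero {P : ℂ} (hP : P ≠ 0) :
    ∀ᶠ w : ℝ in atTop, ((1 + w * I) * P).re ≠ 0 := by
  rcases eq_or_ne P.im 0 with h | h
  · exact Eventually.of_forall fun w hre => hP (Complex.ext (by simpa [h] using hre) h)
  · filter_upwards [eventually_ne_atTop (P.re / P.im)] with w hw hre
    simp only [mul_re, mul_im, add_re, add_im, one_re, one_im, ofReal_re, ofReal_im, I_re,
      I_im] at hre
    exact hw (by field_simp; linarith)

lemma exists_re_ne_zero_im_sq_pos {P S : ℂ} (h₁ : (P * conj S).im ≠ 0)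
    (h₂ : normSq P ≠ normSq S) :
    ∃ w : ℝ, 0 < (((1 + w * I) * (P - S)) ^ 2).im ∧ 0 < (((1 + w * I) * (P + S)) ^ 2).im ∧
      ((1 + w * I) * P).re ≠ 0 ∧ ((1 + w * I) * S).re ≠ 0 := by
  have hm : 0 < ((normSq P - normSq S) * (P * conj S).im) ^ 2 :=
    sq_pos_of_ne_zero (mul_ne_zero (sub_ne_zero.2 h₂) h₁)
  have hP : P ≠ 0 := by rintro rfl; simp at h₁
  have hS : S ≠ 0 := by rintro rfl; simp at h₁
  set ζ := balancingDirection P S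
  by_cases hζ : 0 < ‖ζ‖ + ζ.re
  · set w := ζ.im / (‖ζ‖ + ζ.re)
    have hk : 0 < 2 / (‖ζ‖ + ζ.re) := div_pos two_pos hζ
    have hsq : ∀ W : ℂ, (((1 + w * I) * W) ^ 2).im = 2 / (‖ζ‖ + ζ.re) * (ζ * W ^ 2).im := by
      intro W
      rw [mul_pow, one_add_mul_I_sq hζ, mul_assoc, im_ofReal_mul]
    have hξ : (1 + w * I : ℂ) ≠ 0 := fun h => by simpa using congrArg re h
    have hPS : ((1 + w * I) * P * ((1 + w * I) * S)).im = 0 := by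
      rw [show (1 + w * I) * P * ((1 + w * I) * S) = (1 + w * I) ^ 2 * (P * S) by ring,
        one_add_mul_I_sq hζ, mul_assoc, im_ofReal_mul, im_balancingDirection_mul_mul, mul_zero]
    have hplus : 0 < (((1 + w * I) * (P + S)) ^ 2).im := by
      rw [hsq, im_balancingDirection_mul_add_sq]; exact mul_pos hk hm
    refine ⟨w, ?_, hplus, fun h => ?_, fun h => ?_⟩
    · rw [hsq, im_balancingDirection_mul_sub_sq]; exact mul_pos hk hm
    · rw [mul_add] at hplus
      exact mul_ne_zero hξ hP (eq_zero_of_re_eq_zero_of_im_mul_eq_zero hPS hplus h)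
    · rw [mul_add, add_comm] at hplus
      exact mul_ne_zero hξ hS
        (eq_zero_of_re_eq_zero_of_im_mul_eq_zero (by rwa [mul_comm]) hplus h)
  · have hζim : ζ.im = 0 := by
      have := Complex.sq_norm_sub_sq_re ζ
      nlinarith [Complex.abs_re_le_norm ζ, abs_nonneg ζ.re, neg_abs_le ζ.re, norm_nonneg ζ]
    have him_neg : ∀ W : ℂ, 0 < (ζ * W).im → W.im < 0 := by
      intro W hW
      rw [mul_im, hζim, zero_mul, add_zero] at hW
      nlinarith [Complex.abs_re_le_norm ζ, neg_abs_le ζ.re, norm_nonneg ζ]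
    have hminus := him_neg _ ((im_balancingDirection_mul_sub_sq P S).symm ▸ hm)
    have hplus := him_neg _ ((im_balancingDirection_mul_add_sq P S).symm ▸ hm)
    exact ((eventually_atTop_im_sq_pos hminus).and ((eventually_atTop_im_sq_pos hplus).and
      ((eventually_atTop_re_ne_zero hP).and (eventually_atTop_re_ne_zero hS)))).exists

lemma exists_rotation_products_pos {p q s t : ℝ} (h₁ : p * t ≠ q * s)
    (h₂ : p ^ 2 + q ^ 2 ≠ s ^ 2 + t ^ 2) :
    ∃ w : ℝ, 0 < (p - q * w - (s - t * w)) * (q + p * w - (t + s * w)) ∧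
      0 < (p - q * w + (s - t * w)) * (q + p * w + (t + s * w)) ∧
      p - q * w ≠ 0 ∧ s - t * w ≠ 0 := by
  obtain ⟨w, hminus, hplus, ha, hc⟩ := exists_re_ne_zero_im_sq_pos (P := ⟨p, q⟩) (S := ⟨s, t⟩)
    (by simp only [mul_im, conj_re, conj_im]; intro h; apply h₁; linarith)
    (by simp only [normSq_apply]; intro h; apply h₂; linarith)
  simp only [sq, mul_re, mul_im, add_re, add_im, sub_re, sub_im, one_re, one_im, ofReal_re,
    ofReal_im, I_re, I_im] at hminus hplus ha hc
  exact ⟨w, by linarith, by linarith, fun h => ha (by linear_combination h),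
    fun h => hc (by linear_combination h)⟩

theorem exists_rotation_stable_distinct_roots_general (d : ℕ) (hd : 1 ≤ d) (p q s t : ℝ)
    (h1 : p * t ≠ q * s) (h2 : p ^ 2 + q ^ 2 ≠ s ^ 2 + t ^ 2)
    (r : ℝ) (hr : r = 1 ∨ r = -1) :
    ∃ w : ℝ,
      (∀ z : ℂ,
        ((q : ℂ) + (p : ℂ) * (w : ℂ) + ((p : ℂ) - (q : ℂ) * (w : ℂ)) * z) ^ d +
          (r : ℂ) * ((t : ℂ) + (s : ℂ) * (w : ℂ) + ((s : ℂ) - (t : ℂ) * (w : ℂ)) * z) ^ d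
            = 0 → z.re < 0) ∧
      p - q * w ≠ 0 ∧ s - t * w ≠ 0 := by
  obtain ⟨w, hminus, hplus, ha, hc⟩ := exists_rotation_products_pos h1 h2
  refine ⟨w, fun z hz => re_neg_of_norm_add_mul_eq hminus hplus ?_, ha, hc⟩
  refine norm_eq_of_pow_add_mul_pow_eq_zero (r := r) (by omega : d ≠ 0) ?_ ?_
  · rcases hr with rfl | rfl <;> simp
  · push_cast; exact hz

/-- Case `b² - 4ac > 0`: for a signature `(p,q)^{⊗d} + r (s,t)^{⊗d}` with `pt ≠ qs`,
`p² + q² ≠ s² + t²` and `q² ≠ t²`, there is an orthogonal-type parameter `w` such that all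
zeros of the transformed local polynomial lie in the open left half-plane, and the
transformed polynomial has degree exactly `d`. -/
theorem exists_rotation_stable_distinct_roots (d : ℕ) (hd : 1 ≤ d) (p q s t : ℝ)
    (h1 : p * t ≠ q * s) (h2 : p ^ 2 + q ^ 2 ≠ s ^ 2 + t ^ 2) (h3 : q ^ 2 ≠ t ^ 2)
    (r : ℝ) (hr : r = 1 ∨ r = -1) :
    ∃ w : ℝ,
      (∀ z : ℂ,
        ((q : ℂ) + (p : ℂ) * (w : ℂ) + ((p : ℂ) - (q : ℂ) * (w : ℂ)) * z) ^ d +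
          (r : ℂ) * ((t : ℂ) + (s : ℂ) * (w : ℂ) + ((s : ℂ) - (t : ℂ) * (w : ℂ)) * z) ^ d
            = 0 → z.re < 0) ∧
      p - q * w ≠ 0 ∧ s - t * w ≠ 0 :=
  exists_rotation_stable_distinct_roots_general d hd p q s t h1 h2 r hr
end

section
/- Let d ≥ 3, let φ ∈ ℝ with φ ≠ 0, let x > 0 and y ∈ ℝ, and suppose that (x + y·k)·φ^k ≥ 0 for all 0 ≤ k ≤ d. Then there exists w ∈ ℝ such that every complex zero of the polynomial Q(z) = x·(1 − φ·w + (φ + w)·z)^d + y·d·(1 − φ·w + (φ + w)·z)^{d−1}·(−φ·w + φ·z) has strictly negative real part. -/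
lemma re_neg_of_linear {C N : ℝ} (hC : 0 < C) (hN : N < 0) {z : ℂ}
    (h : (C : ℂ) * z = (N : ℂ)) : z.re < 0 := by
  have h2 := congrArg Complex.re h
  simp [Complex.mul_re] at h2
  have : z.re = N / C := by field_simp; linarith
  rw [this]
  exact div_neg_of_neg_of_pos hN hC

/-- Case `b² = 4ac`, `b ≠ 0`: for the nonnegative signature `f_k = (x + yk) φ^k` with
`φ ≠ 0` and `x > 0`, there is a parameter `w` such that all zeros of the transformed local
polynomial lie in the open left half-plane. -/
theorem exists_rotation_stable_double_root (d : ℕ) (hd : 3 ≤ d) (φ : ℝ) (hφ : φ ≠ 0)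
    (x : ℝ) (hx : 0 < x) (y : ℝ) (hnn : ∀ k ≤ d, 0 ≤ (x + y * k) * φ ^ k) :
    ∃ w : ℝ, ∀ z : ℂ,
      (x : ℂ) * (1 - (φ : ℂ) * (w : ℂ) + ((φ : ℂ) + (w : ℂ)) * z) ^ d +
        (y : ℂ) * (d : ℂ) * (1 - (φ : ℂ) * (w : ℂ) + ((φ : ℂ) + (w : ℂ)) * z) ^ (d - 1) *
          (-(φ : ℂ) * (w : ℂ) + (φ : ℂ) * z) = 0 →
      z.re < 0 := by
  -- φ must be positive
  have h1 := hnn 1 (by omega)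
  have h2 := hnn 2 (by omega)
  have hφpos : 0 < φ := by
    rcases hφ.lt_or_gt with hneg | hpos
    · exfalso
      norm_num at h1 h2
      nlinarith [mul_nonneg h1 (show (0:ℝ) ≤ -φ by linarith), h2,
        mul_pos hx (mul_pos_of_neg_of_neg hneg hneg)]
    · exact hpos
  have hB : 0 ≤ x + y * d := by
    have hdd := hnn d le_rfl
    have hp : 0 < φ ^ d := pow_pos hφpos d
    nlinarith
  set c : ℝ := φ * (x + y * d) with hc
  have hc0 : 0 ≤ c := mul_nonneg hφpos.le hB
  refine ⟨min (1 / (2 * φ)) (x / (2 * (c + 1))), ?_⟩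
  set w : ℝ := min (1 / (2 * φ)) (x / (2 * (c + 1))) with hw
  have hwpos : 0 < w := lt_min (by positivity) (by positivity)
  have hφw : φ * w < 1 := by
    have : w ≤ 1 / (2 * φ) := min_le_left _ _
    calc φ * w ≤ φ * (1 / (2 * φ)) := by nlinarith
    _ = 1 / 2 := by field_simp
    _ < 1 := by norm_num
  have hwc : w * c < x := by
    have h3 : w ≤ x / (2 * (c + 1)) := min_le_right _ _
    have h4 : w * c ≤ (x / (2 * (c + 1))) * c := by nlinarith
    have h5 : (x / (2 * (c + 1))) * c ≤ x / 2 := by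
      rw [div_mul_eq_mul_div, div_le_div_iff₀ (by positivity) (by norm_num)]
      nlinarith
    linarith
  intro z hz
  obtain ⟨e, rfl⟩ : ∃ e, d = e + 1 := ⟨d - 1, by omega⟩
  simp only [Nat.add_sub_cancel] at hz
  set L : ℂ := 1 - (φ : ℂ) * w + ((φ : ℂ) + w) * z with hL
  have hfact : L ^ e * ((x : ℂ) * L + (y : ℂ) * ((e : ℂ) + 1) * (-(φ : ℂ) * w + (φ : ℂ) * z)) = 0 := by
    rw [← hz]
    push_cast
    ring
  rcases mul_eq_zero.mp hfact with hL0 | hlin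
  · -- L = 0
    have hLz : L = 0 := (pow_eq_zero_iff'.mp hL0).1
    have heq : ((φ + w : ℝ) : ℂ) * z = ((φ * w - 1 : ℝ) : ℂ) := by
      push_cast
      linear_combination hLz
    exact re_neg_of_linear (by linarith) (by linarith) heq
  · -- linear factor = 0
    have heq : ((x * w + c : ℝ) : ℂ) * z = ((w * c - x : ℝ) : ℂ) := by
      push_cast [hc]
      linear_combination hlin
    have hC : 0 < x * w + c := by nlinarith
    exact re_neg_of_linear hC (by linarith) heq
end

section
/- Let d ≥ 1, let x ∈ ℂ with x ≠ 0, and let φ ∈ ℂ with Im φ ≠ 0. Then every complex zero of the polynomial z ↦ x·(1 + φ·z)^d + conj(x)·(1 + conj(φ)·z)^d is a real number. -/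
/-! At a zero `z` the two summands have equal norm, and `‖x‖ = ‖conj x‖ ≠ 0`, so
`‖1 + φ z‖ = ‖1 + conj φ z‖`. Expanding the squared norms, the two sides differ by
`-4 · Im φ · Im z`, which forces `Im z = 0` since `Im φ ≠ 0`. -/

open ComplexConjugate

theorem norm_eq_of_mul_pow_add_mul_pow_eq_zero {𝕜 : Type*} [NormedDivisionRing 𝕜]
    {a b u v : 𝕜} {d : ℕ} (hd : d ≠ 0) (ha : a ≠ 0) (hab : ‖a‖ = ‖b‖)
    (h : a * u ^ d + b * v ^ d = 0) : ‖u‖ = ‖v‖ := by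
  have hpow : ‖a * u ^ d‖ = ‖b * v ^ d‖ := by rw [eq_neg_of_add_eq_zero_left h, norm_neg]
  rw [norm_mul, norm_mul, norm_pow, norm_pow, ← hab] at hpow
  exact (pow_left_inj₀ (norm_nonneg _) (norm_nonneg _) hd).mp
    (mul_left_cancel₀ (norm_ne_zero_iff.mpr ha) hpow)

namespace Complex

theorem normSq_one_add_mul_sub_normSq_one_add_conj_mul (w z : ℂ) :
    normSq (1 + w * z) - normSq (1 + conj w * z) = -4 * w.im * z.im := by
  simp only [normSq_apply, add_re, add_im, mul_re, mul_im, conj_re, conj_im, one_re, one_im]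
  ring

theorem norm_one_add_mul_eq_norm_one_add_conj_mul_iff (w z : ℂ) :
    ‖1 + w * z‖ = ‖1 + conj w * z‖ ↔ w.im = 0 ∨ z.im = 0 := by
  have hdiff := normSq_one_add_mul_sub_normSq_one_add_conj_mul w z
  rw [← sq_eq_sq₀ (norm_nonneg _) (norm_nonneg _), ← normSq_eq_norm_sq, ← normSq_eq_norm_sq,
    ← sub_eq_zero, hdiff]
  simp

end Complex

/-- Case `b² - 4ac < 0`: every zero of `x (1 + φz)^d + x̄ (1 + φ̄z)^d` with `x ≠ 0` and
`Im φ ≠ 0` is real. -/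
theorem zeros_real_conjugate_roots (d : ℕ) (hd : 1 ≤ d) (x : ℂ) (hx : x ≠ 0)
    (φ : ℂ) (hφ : φ.im ≠ 0) :
    ∀ z : ℂ,
      x * (1 + φ * z) ^ d + (starRingEnd ℂ) x * (1 + (starRingEnd ℂ) φ * z) ^ d = 0 →
      z.im = 0 := by
  intro z hz
  have hnorm : ‖1 + φ * z‖ = ‖1 + conj φ * z‖ :=
    norm_eq_of_mul_pow_add_mul_pow_eq_zero (Nat.one_le_iff_ne_zero.mp hd) hx
      (Complex.norm_conj x).symm hz
  exact ((Complex.norm_one_add_mul_eq_norm_one_add_conj_mul_iff φ z).mp hnorm).resolve_left hφ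
end

section
/- Let a, b, c be real numbers with b² − 4ac < 0, let d ≥ 3, and let f_0, f_1, …, f_d be real numbers with f_0 > 0, f_k ≥ 0 for all 0 ≤ k ≤ d, and a·f_k + b·f_{k+1} + c·f_{k+2} = 0 for all 0 ≤ k ≤ d−2. Then every complex zero of the local polynomial P_f(z) = Σ_{k=0}^d C(d,k)·f_k·z^k is a strictly negative real number; consequently there exists ε > 0 such that P_f(z) ≠ 0 for all z ∈ ℂ with Re z ≥ −ε. -/
open Finset Complex ComplexConjugate Filter Topology Polynomial

/-!
The characteristic polynomial `c z² + b z + a` has a non-real root `μ`, so the recurrence forces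
`f k = Re (γ μ^k)` for a suitable `γ ∈ ℂ`. By the binomial theorem
`2 P_f(z) = γ (μ z + 1)^d + γ̄ (μ̄ z + 1)^d`, so at a zero `|μ z + 1| = |μ̄ z + 1|`, which forces
`z` to be real since `Im μ ≠ 0`. A real zero is negative because the coefficients are nonnegative
with `f 0 > 0`, and a uniform `ε` exists because there are finitely many zeros.
-/

theorem ne_zero_of_sq_sub_four_mul_neg {a b c : ℝ} (hdisc : b ^ 2 - 4 * a * c < 0) : c ≠ 0 := by
  rintro rfl
  nlinarith [sq_nonneg b]

theorem exists_quadratic_root_im_ne_zero {a b c : ℝ} (hdisc : b ^ 2 - 4 * a * c < 0) :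
    ∃ μ : ℂ, μ.im ≠ 0 ∧ (a : ℂ) + b * μ + c * μ ^ 2 = 0 := by
  have hc := ne_zero_of_sq_sub_four_mul_neg hdisc
  set s := Real.sqrt (4 * a * c - b ^ 2)
  have hs : (s : ℂ) ^ 2 = 4 * a * c - b ^ 2 := by
    exact_mod_cast Real.sq_sqrt (by linarith : 0 ≤ 4 * a * c - b ^ 2)
  refine ⟨(-b + s * I) / (2 * c : ℝ), ?_, ?_⟩
  · rw [div_ofReal_im]
    simpa using ⟨(Real.sqrt_pos.2 (by linarith : 0 < 4 * a * c - b ^ 2)).ne', hc⟩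
  · have hc' : (c : ℂ) ≠ 0 := by exact_mod_cast hc
    push_cast
    field_simp
    linear_combination -hs + (s : ℂ) ^ 2 * I_sq

theorem exists_re_eq_and_re_mul_eq {μ : ℂ} (hμ : μ.im ≠ 0) (x₀ x₁ : ℝ) :
    ∃ γ : ℂ, γ.re = x₀ ∧ (γ * μ).re = x₁ :=
  ⟨⟨x₀, (x₀ * μ.re - x₁) / μ.im⟩, rfl, by rw [mul_re]; field_simp; ring⟩

theorem re_mul_pow_recurrence {a b c : ℝ} {μ : ℂ} (hμ : (a : ℂ) + b * μ + c * μ ^ 2 = 0)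
    (γ : ℂ) (k : ℕ) :
    a * (γ * μ ^ k).re + b * (γ * μ ^ (k + 1)).re + c * (γ * μ ^ (k + 2)).re = 0 := by
  have : (a : ℂ) * (γ * μ ^ k) + b * (γ * μ ^ (k + 1)) + c * (γ * μ ^ (k + 2)) = 0 := by
    linear_combination (γ * μ ^ k) * hμ
  simpa only [add_re, re_ofReal_mul, zero_re] using congrArg re this

theorem eq_of_second_order_recurrence {R : Type*} [Field R] {a b c : R} (hc : c ≠ 0) {d : ℕ}
    {f g : ℕ → R}
    (hf : ∀ k, k + 2 ≤ d → a * f k + b * f (k + 1) + c * f (k + 2) = 0)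
    (hg : ∀ k, k + 2 ≤ d → a * g k + b * g (k + 1) + c * g (k + 2) = 0)
    (h₀ : f 0 = g 0) (h₁ : f 1 = g 1) : ∀ k ≤ d, f k = g k := by
  intro k
  induction k using Nat.twoStepInduction with
  | zero => exact fun _ => h₀
  | one => exact fun _ => h₁
  | more n ih₀ ih₁ =>
    intro hn
    refine mul_left_cancel₀ hc ?_
    linear_combination (hf n hn) - (hg n hn) - a * ih₀ (by omega) - b * ih₁ (by omega)

theorem sum_choose_mul_re_mul_pow {d : ℕ} {f : ℕ → ℝ} {γ μ : ℂ}
    (hf : ∀ k ≤ d, f k = (γ * μ ^ k).re) (z : ℂ) :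
    ∑ k ∈ range (d + 1), (d.choose k : ℂ) * (f k : ℂ) * z ^ k
      = (γ * (μ * z + 1) ^ d + conj γ * (conj μ * z + 1) ^ d) / 2 := by
  rw [add_pow, add_pow, mul_sum, mul_sum, ← sum_add_distrib, sum_div]
  refine sum_congr rfl fun k hk => ?_
  have hfk : (f k : ℂ) = (γ * μ ^ k + conj (γ * μ ^ k)) / 2 := by
    rw [add_conj, hf k (Nat.lt_succ_iff.mp (mem_range.mp hk))]
    push_cast
    ring
  rw [hfk, map_mul, map_pow]
  ring

theorem normSq_mul_add_one_sub_normSq_conj_mul_add_one (μ z : ℂ) :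
    normSq (μ * z + 1) - normSq (conj μ * z + 1) = -4 * μ.im * z.im := by
  simp only [normSq_apply, add_re, add_im, mul_re, mul_im, conj_re, conj_im, one_re, one_im]
  ring

theorem im_eq_zero_of_mul_pow_add_conj_eq_zero {γ μ z : ℂ} {d : ℕ} (hγ : γ ≠ 0)
    (hμ : μ.im ≠ 0) (hd : d ≠ 0) (h : γ * (μ * z + 1) ^ d + conj γ * (conj μ * z + 1) ^ d = 0) :
    z.im = 0 := by
  have hpow : ‖μ * z + 1‖ ^ d = ‖conj μ * z + 1‖ ^ d := by
    have := congrArg norm (eq_neg_of_add_eq_zero_left h)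
    simp only [norm_mul, norm_pow, norm_neg, RCLike.norm_conj] at this
    exact mul_left_cancel₀ (norm_ne_zero_iff.2 hγ) this
  have hnorm := (pow_left_inj₀ (norm_nonneg _) (norm_nonneg _) hd).1 hpow
  have hsq : normSq (μ * z + 1) = normSq (conj μ * z + 1) := by
    rw [← Complex.sq_norm, ← Complex.sq_norm, hnorm]
  have := normSq_mul_add_one_sub_normSq_conj_mul_add_one μ z
  rw [hsq, sub_self] at this
  have : μ.im * z.im = 0 := by linarith
  exact (mul_eq_zero.1 this).resolve_left hμ

theorem sum_range_mul_pow_pos {d : ℕ} {p : ℕ → ℝ} (hp₀ : 0 < p 0) (hp : ∀ k ≤ d, 0 ≤ p k) {x : ℝ}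
    (hx : 0 ≤ x) : 0 < ∑ k ∈ range (d + 1), p k * x ^ k := by
  refine sum_pos' (fun k hk => ?_) ⟨0, by simp, by simpa using hp₀⟩
  have := hp k (Nat.lt_succ_iff.mp (mem_range.mp hk))
  positivity

theorem Polynomial.exists_pos_forall_neg_le_re_eval_ne_zero {p : ℂ[X]} (hp : p ≠ 0)
    (hroots : ∀ z, p.eval z = 0 → z.re < 0) :
    ∃ ε : ℝ, 0 < ε ∧ ∀ z : ℂ, -ε ≤ z.re → p.eval z ≠ 0 := by
  have hfin : {z | p.IsRoot z}.Finite := finite_setOfPred_isRoot hp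
  have : ∀ᶠ ε in 𝓝[>] (0 : ℝ), 0 < ε ∧ ∀ z ∈ {z | p.IsRoot z}, ε < -z.re :=
    (eventually_mem_nhdsWithin (a := (0 : ℝ))).and <| (eventually_all_finite hfin).2 fun z hz =>
      (eventually_lt_nhds (neg_pos.2 (hroots z hz))).filter_mono nhdsWithin_le_nhds
  obtain ⟨ε, hε, hlt⟩ := this.exists
  exact ⟨ε, hε, fun z hz hz0 => (hlt z hz0).not_ge (by linarith)⟩

noncomputable def localPolynomial (d : ℕ) (f : ℕ → ℝ) : ℂ[X] :=
  ∑ k ∈ range (d + 1), C ((d.choose k : ℂ) * f k) * X ^ k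

theorem eval_localPolynomial (d : ℕ) (f : ℕ → ℝ) (z : ℂ) :
    (localPolynomial d f).eval z = ∑ k ∈ range (d + 1), (d.choose k : ℂ) * (f k : ℂ) * z ^ k := by
  simp [localPolynomial, eval_finsetSum]

theorem localPolynomial_ne_zero {d : ℕ} {f : ℕ → ℝ} (hf₀ : f 0 ≠ 0) : localPolynomial d f ≠ 0 :=
  fun h => hf₀ <| by simpa [eval_localPolynomial, sum_range_succ'] using congrArg (·.eval 0) h

theorem eval_localPolynomial_ofReal_ne_zero {d : ℕ} {f : ℕ → ℝ} (hf₀ : 0 < f 0)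
    (hf : ∀ k ≤ d, 0 ≤ f k) {x : ℝ} (hx : 0 ≤ x) : (localPolynomial d f).eval (x : ℂ) ≠ 0 := by
  have hpos := sum_range_mul_pow_pos (p := fun k => d.choose k * f k) (by simpa using hf₀)
    (fun k hk => mul_nonneg (d.choose k).cast_nonneg (hf k hk)) hx
  rw [eval_localPolynomial]
  exact_mod_cast hpos.ne'

/-- Case `b² - 4ac < 0`: the local polynomial `P_f(z) = ∑ C(d,k) f_k z^k` of a nonnegative
signature with `f_0 > 0` satisfying the recurrence has only strictly negative real zeros;
consequently it is `H_ε`-stable for some `ε > 0`. -/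
theorem local_polynomial_stable_complex_roots (a b c : ℝ) (hdisc : b ^ 2 - 4 * a * c < 0)
    (d : ℕ) (hd : 3 ≤ d) (f : ℕ → ℝ) (hf0 : 0 < f 0) (hnn : ∀ k ≤ d, 0 ≤ f k)
    (hrec : ∀ k : ℕ, k + 2 ≤ d → a * f k + b * f (k + 1) + c * f (k + 2) = 0) :
    (∀ z : ℂ, ∑ k ∈ Finset.range (d + 1), (d.choose k : ℂ) * (f k : ℂ) * z ^ k = 0 →
      z.im = 0 ∧ z.re < 0) ∧
    ∃ ε : ℝ, 0 < ε ∧ ∀ z : ℂ, -ε ≤ z.re →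
      ∑ k ∈ Finset.range (d + 1), (d.choose k : ℂ) * (f k : ℂ) * z ^ k ≠ 0 := by
  obtain ⟨μ, hμ, hroot⟩ := exists_quadratic_root_im_ne_zero hdisc
  obtain ⟨γ, hγ₀, hγ₁⟩ := exists_re_eq_and_re_mul_eq hμ (f 0) (f 1)
  have hγ : γ ≠ 0 := by rintro rfl; simp only [zero_re] at hγ₀; linarith
  have hfγ : ∀ k ≤ d, f k = (γ * μ ^ k).re :=
    eq_of_second_order_recurrence (ne_zero_of_sq_sub_four_mul_neg hdisc) hrec
      (fun k _ => re_mul_pow_recurrence hroot γ k) (by simpa using hγ₀.symm)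
      (by simpa using hγ₁.symm)
  have hroots : ∀ z, (localPolynomial d f).eval z = 0 → z.im = 0 ∧ z.re < 0 := by
    intro z hz
    have him : z.im = 0 := by
      rw [eval_localPolynomial, sum_choose_mul_re_mul_pow hfγ, div_eq_zero_iff] at hz
      exact im_eq_zero_of_mul_pow_add_conj_eq_zero hγ hμ (by omega) (hz.resolve_right two_ne_zero)
    refine ⟨him, not_le.1 fun hre => eval_localPolynomial_ofReal_ne_zero hf0 hnn hre ?_⟩
    rwa [← re_add_im z, him, ofReal_zero, zero_mul, add_zero] at hz
  obtain ⟨ε, hε, hstable⟩ := Polynomial.exists_pos_forall_neg_le_re_eval_ne_zero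
    (localPolynomial_ne_zero hf0.ne') fun z hz => (hroots z hz).2
  simp only [eval_localPolynomial] at hroots hstable
  exact ⟨hroots, ε, hε, hstable⟩
end
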